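/- arXiv:1702.03552 — 9 statements merged into one kernel-verified Lean document; each statement's English description precedes it below -/
import Mathlib

section
/- Let K : (0, ∞) → ℝ be continuous, and let κ, k : (0, ∞) → ℝ be differentiable functions satisfying the Riccati equation u'(r) + u(r)² + K(r) = 0 for all r > 0. Assume k(r) ≥ 0 for all r > 0, and assume that for every δ > 0 there exists r ∈ (0, δ) with κ(r) > k(r). Then 0 < κ(r) − k(r) ≤ 1/r for all r > 0. -/
open Set intervalIntegral

/-- If `w' = -w*g` with `g` continuous on `(0,∞)` and `w s > 0`, then `w` stays positive
to the right of `s`. -/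
lemma riccati_pos_aux (g w : ℝ → ℝ) (hg : ContinuousOn g (Set.Ioi 0))
    (hw : ∀ t : ℝ, 0 < t → HasDerivAt w (-(w t) * g t) t)
    (s : ℝ) (hs : 0 < s) (hws : 0 < w s) :
    ∀ r : ℝ, s ≤ r → 0 < w r := by
  intro r hr
  set c := s / 2 with hc
  have hcpos : 0 < c := by positivity
  set g1 : ℝ → ℝ := fun x => g (max x c) with hg1def
  have hg1 : Continuous g1 := by
    apply hg.comp_continuous (continuous_id.max continuous_const)
    intro x
    exact lt_of_lt_of_le hcpos (le_max_right x c)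
  have hg1eq : ∀ t : ℝ, s ≤ t → g1 t = g t := by
    intro t ht
    simp only [hg1def]
    rw [max_eq_left]
    linarith
  set F : ℝ → ℝ := fun t => ∫ x in s..t, g1 x with hF
  have hF' : ∀ t : ℝ, HasDerivAt F (g1 t) t := fun t =>
    integral_hasDerivAt_right (hg1.intervalIntegrable _ _)
      (hg1.stronglyMeasurableAtFilter _ _) hg1.continuousAt
  set h : ℝ → ℝ := fun t => w t * Real.exp (F t) with hh
  have hderiv : ∀ t ∈ Set.Icc s r, HasDerivAt h 0 t := by
    intro t ht
    have htpos : 0 < t := lt_of_lt_of_le hs ht.1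
    have := ((hw t htpos).mul ((hF' t).exp))
    have heq : -(w t) * g t * Real.exp (F t) + w t * (Real.exp (F t) * g1 t) = 0 := by
      rw [hg1eq t ht.1]; ring
    rw [heq] at this
    exact this
  have hcont : ContinuousOn h (Set.Icc s r) := fun t ht =>
    ((hderiv t ht).continuousAt).continuousWithinAt
  have := constant_of_has_deriv_right_zero hcont
    (fun x hx => ((hderiv x ⟨hx.1, hx.2.le⟩).hasDerivWithinAt)) r ⟨hr, le_rfl⟩
  have hhr : h r = h s := this
  have : 0 < h s := mul_pos hws (Real.exp_pos _)
  rw [← hhr] at this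
  have hexp : 0 < Real.exp (F r) := Real.exp_pos _
  have h2 : 0 < w r * Real.exp (F r) := this
  nlinarith

/-- Scalar form of the large-radius curvature comparison: if `κ` and `k` both solve
the Riccati equation `u' + u² + K = 0` on `(0, ∞)`, `k ≥ 0`, and `κ > k` at points
arbitrarily close to `0`, then `0 < κ(r) - k(r) ≤ 1/r` for all `r > 0`. -/
theorem stmt_4 (K κ k : ℝ → ℝ)
    (hK : ContinuousOn K (Set.Ioi 0))
    (hκ : ∀ r : ℝ, 0 < r → HasDerivAt κ (-(κ r) ^ 2 - K r) r)
    (hk : ∀ r : ℝ, 0 < r → HasDerivAt k (-(k r) ^ 2 - K r) r)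
    (hknn : ∀ r : ℝ, 0 < r → 0 ≤ k r)
    (hnear : ∀ δ : ℝ, 0 < δ → ∃ r : ℝ, 0 < r ∧ r < δ ∧ k r < κ r) :
    ∀ r : ℝ, 0 < r → 0 < κ r - k r ∧ κ r - k r ≤ 1 / r := by
  set w : ℝ → ℝ := fun t => κ t - k t with hwdef
  set g : ℝ → ℝ := fun t => κ t + k t with hgdef
  have hgc : ContinuousOn g (Set.Ioi 0) := fun t ht =>
    (((hκ t ht).continuousAt).add ((hk t ht).continuousAt)).continuousWithinAt
  have hw' : ∀ t : ℝ, 0 < t → HasDerivAt w (-(w t) * g t) t := by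
    intro t ht
    have := (hκ t ht).sub (hk t ht)
    have heq : -(κ t) ^ 2 - K t - (-(k t) ^ 2 - K t) = -(w t) * g t := by
      simp only [hwdef, hgdef]; ring
    rwa [heq] at this
  -- positivity of w on (0, ∞)
  have hwpos : ∀ r : ℝ, 0 < r → 0 < w r := by
    intro r hr
    obtain ⟨s, hs0, hsr, hks⟩ := hnear r hr
    exact riccati_pos_aux g w hgc hw' s hs0 (by simp [hwdef]; linarith) r hsr.le
  intro r hr
  refine ⟨hwpos r hr, ?_⟩
  -- upper bound: u = 1/w satisfies u' ≥ 1
  set u : ℝ → ℝ := fun t => (w t)⁻¹ - t with hu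
  have hu' : ∀ t : ℝ, 0 < t → HasDerivAt u (g t / w t - 1) t := by
    intro t ht
    have hwt := (hwpos t ht).ne'
    have h1 : HasDerivAt (fun x => (w x)⁻¹) (-(-(w t) * g t) / (w t) ^ 2) t :=
      (hw' t ht).inv hwt
    have h2 := h1.sub (hasDerivAt_id t)
    have heq : -(-(w t) * g t) / (w t) ^ 2 - 1 = g t / w t - 1 := by
      field_simp
    rw [heq] at h2
    exact h2
  have key : ∀ s : ℝ, 0 < s → s < r → u s ≤ u r := by
    intro s hs hsr
    have hmono : MonotoneOn u (Set.Icc s r) := by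
      apply monotoneOn_of_deriv_nonneg (convex_Icc s r)
      · intro t ht
        exact ((hu' t (lt_of_lt_of_le hs ht.1)).continuousAt).continuousWithinAt
      · intro t ht
        rw [interior_Icc] at ht
        exact ((hu' t (lt_trans hs ht.1)).differentiableAt).differentiableWithinAt
      · intro t ht
        rw [interior_Icc] at ht
        have htpos : 0 < t := lt_trans hs ht.1
        rw [(hu' t htpos).deriv]
        have h1 : w t ≤ g t := by
          simp only [hwdef, hgdef]
          have := hknn t htpos
          linarith
        have h2 : 1 ≤ g t / w t :=
          (one_le_div (hwpos t htpos)).mpr h1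
        linarith
    exact hmono ⟨le_rfl, hsr.le⟩ ⟨hsr.le, le_rfl⟩ hsr.le
  -- from key: (w r)⁻¹ ≥ r
  have hinv : r ≤ (w r)⁻¹ := by
    by_contra hcon
    push_neg at hcon
    set s := (r - (w r)⁻¹) / 2 with hsdef
    have hs0 : 0 < s := by
      have : 0 < (w r)⁻¹ := inv_pos.mpr (hwpos r hr)
      simp only [hsdef]
      linarith
    have hsr : s < r := by
      have : 0 < (w r)⁻¹ := inv_pos.mpr (hwpos r hr)
      simp only [hsdef]; linarith
    have := key s hs0 hsr
    have hus : 0 < (w s)⁻¹ := inv_pos.mpr (hwpos s hs0)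
    simp only [hu] at this
    simp only [hsdef] at this hus
    linarith
  have hwr := hwpos r hr
  have h3 : ((w r)⁻¹)⁻¹ ≤ r⁻¹ := inv_anti₀ hr hinv
  rw [inv_inv] at h3
  show w r ≤ 1 / r
  rw [one_div]
  exact h3
end

section
/- Let K : (-∞, 0] → ℝ be continuous with K(r) ≤ 0 for all r ≤ 0. Let u : (-∞, 0] → ℝ be twice continuously differentiable with u''(r) + K(r)u(r) = 0 for all r ≤ 0, u(0) = 0, and u bounded on (-∞, 0]. Then u is identically zero on (-∞, 0] (in particular u'(0) = 0). -/
/-- Monotonicity on a left half-line from a nonnegative derivative. -/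
lemma mono_aux {f f' : ℝ → ℝ} {b : ℝ}
    (hf : ∀ x ≤ b, HasDerivWithinAt f (f' x) (Set.Iic b) x)
    (h : ∀ x ≤ b, 0 ≤ f' x) : MonotoneOn f (Set.Iic b) := by
  apply monotoneOn_of_deriv_nonneg (convex_Iic b)
  · intro x hx
    exact (hf x hx).continuousWithinAt
  · intro x hx
    rw [interior_Iic] at hx
    exact ((hf x hx.le).hasDerivAt (Iic_mem_nhds hx)).differentiableAt.differentiableWithinAt
  · intro x hx
    rw [interior_Iic] at hx
    rw [((hf x hx.le).hasDerivAt (Iic_mem_nhds hx)).deriv]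
    exact h x hx.le

/-- Uniqueness for the scalar Jacobi equation with nonpositive potential:
a bounded solution of `u'' + Ku = 0` on `(-∞, 0]` with `u(0) = 0` vanishes identically. -/
theorem stmt_5 (K u u' u'' : ℝ → ℝ)
    (hK : ContinuousOn K (Set.Iic 0))
    (hKneg : ∀ r : ℝ, r ≤ 0 → K r ≤ 0)
    (hu : ∀ r : ℝ, r ≤ 0 → HasDerivWithinAt u (u' r) (Set.Iic 0) r)
    (hu' : ∀ r : ℝ, r ≤ 0 → HasDerivWithinAt u' (u'' r) (Set.Iic 0) r)
    (hu'' : ContinuousOn u'' (Set.Iic 0))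
    (heq : ∀ r : ℝ, r ≤ 0 → u'' r + K r * u r = 0)
    (h0 : u 0 = 0)
    (hbdd : ∃ C : ℝ, ∀ r : ℝ, r ≤ 0 → |u r| ≤ C) :
    ∀ r : ℝ, r ≤ 0 → u r = 0 := by
  obtain ⟨C, hC⟩ := hbdd
  -- v = u * u' is nondecreasing since v' = u'^2 - K u^2 ≥ 0
  set v : ℝ → ℝ := fun r => u r * u' r with hv
  have hvd : ∀ x ≤ (0:ℝ), HasDerivWithinAt v (u' x * u' x + u x * u'' x) (Set.Iic 0) x :=
    fun x hx => (hu x hx).mul (hu' x hx)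
  have hvd_nonneg : ∀ x ≤ (0:ℝ), 0 ≤ u' x * u' x + u x * u'' x := by
    intro x hx
    have h1 := heq x hx
    have h2 := hKneg x hx
    have h3 : u x * u'' x = -(K x * (u x * u x)) := by
      have h4 : u'' x = -(K x * u x) := by linarith
      rw [h4]; ring
    nlinarith [mul_self_nonneg (u' x), mul_nonneg (neg_nonneg.2 h2) (mul_self_nonneg (u x))]
  have hvmono : MonotoneOn v (Set.Iic 0) := mono_aux hvd hvd_nonneg
  -- v ≥ 0 on Iic 0
  have hvnonneg : ∀ a ≤ (0:ℝ), 0 ≤ v a := by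
    intro a ha
    by_contra hva
    push_neg at hva
    have hC0 : 0 ≤ C := le_trans (abs_nonneg _) (hC 0 le_rfl)
    have hua : u a * u a ≤ C * C := by
      have := hC a ha
      nlinarith [abs_nonneg (u a), abs_mul_abs_self (u a)]
    -- the function x ↦ 2 v a * x - u x * u x is monotone on Iic a
    have hmono2 : MonotoneOn (fun x => 2 * v a * x - u x * u x) (Set.Iic a) := by
      apply mono_aux (f' := fun x => 2 * v a - (u' x * u x + u x * u' x))
      · intro x hx
        have hx0 : x ≤ 0 := hx.trans ha
        have hd1 : HasDerivWithinAt (fun x => 2 * v a * x) (2 * v a) (Set.Iic a) x :=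
          (hasDerivWithinAt_id x _).const_mul (2 * v a) |>.congr_deriv (by ring)
        have hd2 : HasDerivWithinAt (fun x => u x * u x)
            (u' x * u x + u x * u' x) (Set.Iic a) x :=
          ((hu x hx0).mul (hu x hx0)).mono (Set.Iic_subset_Iic.mpr ha)
        exact hd1.sub hd2
      · intro x hx
        have hx0 : x ≤ 0 := hx.trans ha
        have hvx : v x ≤ v a := hvmono hx0 ha hx
        simp only [hv] at hvx ⊢
        nlinarith
    -- pick x₀ far to the left
    set x₀ : ℝ := a + (C * C + 1 - u a * u a) / (2 * v a) with hx₀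
    have hnum : 0 < C * C + 1 - u a * u a := by nlinarith
    have hden : 2 * v a < 0 := by linarith
    have hx₀a : x₀ ≤ a := by
      have h5 : (C * C + 1 - u a * u a) / (2 * v a) < 0 := div_neg_of_pos_of_neg hnum hden
      rw [hx₀]; linarith
    have hx₀0 : x₀ ≤ 0 := hx₀a.trans ha
    have := hmono2 (Set.mem_Iic.mpr hx₀a) (Set.mem_Iic.mpr le_rfl) hx₀a
    simp only at this
    have hprod : 2 * v a * (x₀ - a) = C * C + 1 - u a * u a := by
      rw [hx₀, add_sub_cancel_left]
      exact mul_div_cancel₀ _ (by linarith)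
    have hux₀ : u x₀ * u x₀ ≤ C * C := by
      have := hC x₀ hx₀0
      nlinarith [abs_nonneg (u x₀), abs_mul_abs_self (u x₀)]
    nlinarith
  -- hence w = u * u is nondecreasing on Iic 0
  have hwmono : MonotoneOn (fun x => u x * u x) (Set.Iic 0) := by
    apply mono_aux (f' := fun x => u' x * u x + u x * u' x)
    · intro x hx
      exact (hu x hx).mul (hu x hx)
    · intro x hx
      have := hvnonneg x hx
      simp only [hv] at this
      nlinarith
  intro r hr
  have h1 : u r * u r ≤ u 0 * u 0 := hwmono (Set.mem_Iic.mpr hr) (Set.mem_Iic.mpr le_rfl) hr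
  rw [h0] at h1
  nlinarith [sq_nonneg (u r)]
end

section
/- Let s > 0, let K : [-s, 0] → ℝ be continuous with K(r) ≤ 0 for all r ∈ [-s, 0], and let h : [-s, 0] → ℝ be twice continuously differentiable with h''(r) + K(r)h(r) = 0 on [-s, 0], h(-s) = 0, and h(0) = 1. Then 0 ≤ h(r) ≤ 1 + r/s for all r ∈ [-s, 0], and 0 ≤ h'(-s) ≤ 1/s. -/
/-!
On any interval between consecutive zeros of `h` on which `h ≤ 0`, the equation gives
`h'' = -K h ≤ 0`, so `h` is concave there with zero boundary values, hence `h ≥ 0`: thus `h` has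
no negative values at all. Then `h'' = -K h ≥ 0`, so `h` is convex on `[-s, 0]` and lies below
its chord `1 + r / s`; the derivative at `-s` is nonnegative since `-s` is a minimum point, and at
most the chord slope `1 / s` by convexity.
-/

open Set

section IntervalCalculus

variable {f f' f'' : ℝ → ℝ} {a b : ℝ}

lemma exists_first_zero_of_neg_of_nonneg (hab : a ≤ b) (hf : ContinuousOn f (Icc a b))
    (ha : f a < 0) (hb : 0 ≤ f b) :
    ∃ c ∈ Ioc a b, f c = 0 ∧ ∀ x ∈ Icc a c, f x ≤ 0 := by
  set S := Icc a b ∩ f ⁻¹' {0}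
  have hS_closed : IsClosed S := hf.preimage_isClosed_of_isClosed isClosed_Icc isClosed_singleton
  have hS_bdd : BddBelow S := ⟨a, fun x hx ↦ hx.1.1⟩
  have hS_ne : S.Nonempty := by
    obtain ⟨z, hz, hz0⟩ := intermediate_value_Icc hab hf ⟨ha.le, hb⟩
    exact ⟨z, hz, hz0⟩
  obtain ⟨⟨hca, hcb⟩, hc0⟩ := hS_closed.csInf_mem hS_ne hS_bdd
  have hc0 : f (sInf S) = 0 := hc0
  refine ⟨sInf S, ⟨hca.lt_of_ne fun h ↦ by rw [← h] at hc0; linarith, hcb⟩, hc0, fun x hx ↦ ?_⟩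
  by_contra! hfx
  -- a zero of `f` in `[a, x]` lies below the first zero, so it is `x` itself
  obtain ⟨z, hz, hz0⟩ := intermediate_value_Icc hx.1 (hf.mono (Icc_subset_Icc le_rfl
    (hx.2.trans hcb))) ⟨ha.le, hfx.le⟩
  have hcz : sInf S ≤ z := csInf_le hS_bdd ⟨⟨hz.1, hz.2.trans (hx.2.trans hcb)⟩, hz0⟩
  have hxc : x = sInf S := le_antisymm hx.2 (hcz.trans hz.2)
  rw [hxc, hc0] at hfx
  exact lt_irrefl 0 hfx

lemma exists_last_zero_of_nonneg_of_neg (hab : a ≤ b) (hf : ContinuousOn f (Icc a b))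
    (ha : 0 ≤ f a) (hb : f b < 0) :
    ∃ c ∈ Ico a b, f c = 0 ∧ ∀ x ∈ Icc c b, f x ≤ 0 := by
  have hf_neg : ContinuousOn (fun x ↦ f (-x)) (Icc (-b) (-a)) :=
    hf.comp continuous_neg.continuousOn fun x hx ↦ ⟨le_neg.1 hx.2, neg_le.1 hx.1⟩
  obtain ⟨c, ⟨hbc, hca⟩, hc0, hc⟩ :=
    exists_first_zero_of_neg_of_nonneg (neg_le_neg hab) hf_neg (by simpa) (by simpa)
  refine ⟨-c, ⟨le_neg.1 hca, neg_lt.1 hbc⟩, hc0, fun x hx ↦ ?_⟩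
  simpa using hc (-x) ⟨neg_le_neg hx.2, neg_le.1 hx.1⟩

lemma concaveOn_Icc_of_hasDerivWithinAt2_nonpos
    (hf : ∀ x ∈ Icc a b, HasDerivWithinAt f (f' x) (Icc a b) x)
    (hf' : ∀ x ∈ Icc a b, HasDerivWithinAt f' (f'' x) (Icc a b) x)
    (hf'' : ∀ x ∈ Ioo a b, f'' x ≤ 0) : ConcaveOn ℝ (Icc a b) f := by
  refine concaveOn_of_hasDerivWithinAt2_nonpos (f' := f') (convex_Icc a b)
    (fun x hx ↦ (hf x hx).continuousWithinAt) ?_ ?_ (by rwa [interior_Icc])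
  all_goals
    rw [interior_Icc]
    intro x hx
  · exact (hf x (Ioo_subset_Icc_self hx)).mono Ioo_subset_Icc_self
  · exact (hf' x (Ioo_subset_Icc_self hx)).mono Ioo_subset_Icc_self

lemma convexOn_Icc_of_hasDerivWithinAt2_nonneg
    (hf : ∀ x ∈ Icc a b, HasDerivWithinAt f (f' x) (Icc a b) x)
    (hf' : ∀ x ∈ Icc a b, HasDerivWithinAt f' (f'' x) (Icc a b) x)
    (hf'' : ∀ x ∈ Ioo a b, 0 ≤ f'' x) : ConvexOn ℝ (Icc a b) f := by
  rw [← neg_concaveOn_iff]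
  exact concaveOn_Icc_of_hasDerivWithinAt2_nonpos (fun x hx ↦ (hf x hx).neg)
    (fun x hx ↦ (hf' x hx).neg) fun x hx ↦ neg_nonpos.2 (hf'' x hx)

lemma nonneg_of_hasDerivWithinAt2_nonpos_of_nonpos
    (hf : ∀ x ∈ Icc a b, HasDerivWithinAt f (f' x) (Icc a b) x)
    (hf' : ∀ x ∈ Icc a b, HasDerivWithinAt f' (f'' x) (Icc a b) x)
    (hf'' : ∀ x ∈ Icc a b, f x ≤ 0 → f'' x ≤ 0) (ha : 0 ≤ f a) (hb : 0 ≤ f b) :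
    ∀ x ∈ Icc a b, 0 ≤ f x := by
  intro x₀ hx₀
  by_contra! hfx₀
  have hcont : ContinuousOn f (Icc a b) := fun x hx ↦ (hf x hx).continuousWithinAt
  obtain ⟨c, ⟨hac, hcx₀⟩, hc0, hc⟩ := exists_last_zero_of_nonneg_of_neg hx₀.1
    (hcont.mono (Icc_subset_Icc le_rfl hx₀.2)) ha hfx₀
  obtain ⟨d, ⟨hx₀d, hdb⟩, hd0, hd⟩ := exists_first_zero_of_neg_of_nonneg hx₀.2
    (hcont.mono (Icc_subset_Icc hx₀.1 le_rfl)) hfx₀ hb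
  have hsub : Icc c d ⊆ Icc a b := Icc_subset_Icc hac hdb
  have hnonpos : ∀ x ∈ Icc c d, f x ≤ 0 := fun x hx ↦
    (le_total x x₀).elim (fun h ↦ hc x ⟨hx.1, h⟩) fun h ↦ hd x ⟨h, hx.2⟩
  have hconc : ConcaveOn ℝ (Icc c d) f :=
    concaveOn_Icc_of_hasDerivWithinAt2_nonpos (fun x hx ↦ (hf x (hsub hx)).mono hsub)
      (fun x hx ↦ (hf' x (hsub hx)).mono hsub)
      fun x hx ↦ hf'' x (hsub (Ioo_subset_Icc_self hx)) (hnonpos x (Ioo_subset_Icc_self hx))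
  have hcd : c ≤ d := hcx₀.le.trans hx₀d.le
  have hx₀_ge := hconc.ge_on_segment (left_mem_Icc.2 hcd) (right_mem_Icc.2 hcd)
    (show x₀ ∈ segment ℝ c d by rw [segment_eq_Icc hcd]; exact ⟨hcx₀.le, hx₀d.le⟩)
  rw [hc0, hd0, min_self] at hx₀_ge
  linarith

lemma ConvexOn.mul_le_chord_of_mem_Icc (hf : ConvexOn ℝ (Icc a b) f) {x : ℝ} (hx : x ∈ Icc a b) :
    (b - a) * f x ≤ (b - x) * f a + (x - a) * f b := by
  rcases hx.1.eq_or_lt with rfl | hax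
  · linarith
  rcases hx.2.eq_or_lt with rfl | hxb
  · linarith
  have hab : a ≤ b := hx.1.trans hx.2
  exact hf.secant_mono_aux1 (left_mem_Icc.2 hab) (right_mem_Icc.2 hab) hax hxb

lemma HasDerivWithinAt.nonneg_of_isMinOn_Icc (hab : a < b)
    (hf : HasDerivWithinAt f (f' a) (Icc a b) a) (hmin : IsMinOn f (Icc a b) a) : 0 ≤ f' a := by
  have hdir := hmin.localize.hasFDerivWithinAt_nonneg hf.hasFDerivWithinAt
    (sub_mem_posTangentConeAt_of_segment_subset (segment_subset_Icc hab.le))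
  rw [ContinuousLinearMap.toSpanSingleton_apply, smul_eq_mul] at hdir
  exact nonneg_of_mul_nonneg_right hdir (sub_pos.2 hab)

end IntervalCalculus

theorem stmt_7_general (s : ℝ) (hs : 0 < s) (K h h' h'' : ℝ → ℝ)
    (hKneg : ∀ r ∈ Set.Icc (-s) 0, K r ≤ 0)
    (hh : ∀ r ∈ Set.Icc (-s) 0, HasDerivWithinAt h (h' r) (Set.Icc (-s) 0) r)
    (hh' : ∀ r ∈ Set.Icc (-s) 0, HasDerivWithinAt h' (h'' r) (Set.Icc (-s) 0) r)
    (heq : ∀ r ∈ Set.Icc (-s) 0, h'' r + K r * h r = 0)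
    (hend : h (-s) = 0) (h0 : h 0 = 1) :
    (∀ r ∈ Set.Icc (-s) 0, 0 ≤ h r ∧ h r ≤ 1 + r / s) ∧
      0 ≤ h' (-s) ∧ h' (-s) ≤ 1 / s := by
  have hsI : -s ∈ Icc (-s) 0 := left_mem_Icc.2 (by linarith)
  have h0I : (0 : ℝ) ∈ Icc (-s) 0 := right_mem_Icc.2 (by linarith)
  have hnonneg : ∀ r ∈ Icc (-s) 0, 0 ≤ h r :=
    nonneg_of_hasDerivWithinAt2_nonpos_of_nonpos hh hh'
      (fun r hr hhr ↦ by nlinarith [heq r hr, hKneg r hr]) hend.ge (h0 ▸ zero_le_one)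
  have hconv : ConvexOn ℝ (Icc (-s) 0) h :=
    convexOn_Icc_of_hasDerivWithinAt2_nonneg hh hh' fun r hr ↦ by
      have hr := Ioo_subset_Icc_self hr
      nlinarith [heq r hr, hKneg r hr, hnonneg r hr]
  refine ⟨fun r hr ↦ ⟨hnonneg r hr, ?_⟩, ?_, ?_⟩
  · have hchord := hconv.mul_le_chord_of_mem_Icc hr
    rw [hend, h0] at hchord
    refine le_of_mul_le_mul_left ?_ hs
    rw [mul_add, mul_div_cancel₀ _ hs.ne']
    linarith
  · exact (hh (-s) hsI).nonneg_of_isMinOn_Icc (by linarith)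
      (isMinOn_iff.2 fun r hr ↦ hend ▸ hnonneg r hr)
  · have hslope := hconv.le_slope_of_hasDerivWithinAt hsI h0I (by linarith) (hh (-s) hsI)
    rwa [slope_def_field, hend, h0, sub_zero, sub_neg_eq_add, zero_add] at hslope

/-- For the scalar Jacobi equation `h'' + Kh = 0` with nonpositive potential on `[-s, 0]`,
the solution with `h(-s) = 0` and `h(0) = 1` satisfies `0 ≤ h(r) ≤ 1 + r/s`
and `0 ≤ h'(-s) ≤ 1/s`. -/
theorem stmt_7 (s : ℝ) (hs : 0 < s) (K h h' h'' : ℝ → ℝ)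
    (hK : ContinuousOn K (Set.Icc (-s) 0))
    (hKneg : ∀ r ∈ Set.Icc (-s) 0, K r ≤ 0)
    (hh : ∀ r ∈ Set.Icc (-s) 0, HasDerivWithinAt h (h' r) (Set.Icc (-s) 0) r)
    (hh' : ∀ r ∈ Set.Icc (-s) 0, HasDerivWithinAt h' (h'' r) (Set.Icc (-s) 0) r)
    (hh'' : ContinuousOn h'' (Set.Icc (-s) 0))
    (heq : ∀ r ∈ Set.Icc (-s) 0, h'' r + K r * h r = 0)
    (hend : h (-s) = 0) (h0 : h 0 = 1) :
    (∀ r ∈ Set.Icc (-s) 0, 0 ≤ h r ∧ h r ≤ 1 + r / s) ∧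
      0 ≤ h' (-s) ∧ h' (-s) ≤ 1 / s :=
  stmt_7_general s hs K h h' h'' hKneg hh hh' heq hend h0
end

section
/- Let K : (-∞, 0] → ℝ be continuous with K(r) ≤ 0 for all r ≤ 0, and let 0 < s₁ < s₂. For i = 1, 2 let hᵢ : [-sᵢ, 0] → ℝ be twice continuously differentiable with hᵢ'' + K hᵢ = 0 on [-sᵢ, 0], hᵢ(-sᵢ) = 0, and hᵢ(0) = 1. Then for all r ∈ [-s₁, 0], 0 ≤ h₂(r) − h₁(r) ≤ -r(1/s₁ − 1/s₂). -/
open Set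

/-- A function on `[a,b]` whose given second derivative is nonnegative on the open
interior of a subinterval is convex on that subinterval. -/
lemma jacobi_convexOn_aux {a b a' b' : ℝ} (ha' : a ≤ a') (hb' : b' ≤ b)
    {u u' u'' : ℝ → ℝ}
    (hu : ∀ r ∈ Set.Icc a b, HasDerivWithinAt u (u' r) (Set.Icc a b) r)
    (hu' : ∀ r ∈ Set.Icc a b, HasDerivWithinAt u' (u'' r) (Set.Icc a b) r)
    (hpos : ∀ r ∈ Set.Ioo a' b', 0 ≤ u'' r) :
    ConvexOn ℝ (Set.Icc a' b') u := by
  have hsub : Set.Icc a' b' ⊆ Set.Icc a b := Set.Icc_subset_Icc ha' hb'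
  have hsub' : Set.Ioo a' b' ⊆ Set.Icc a b := fun x hx => hsub (Set.Ioo_subset_Icc_self hx)
  have hint : interior (Set.Icc a' b') = Set.Ioo a' b' := interior_Icc
  refine convexOn_of_hasDerivWithinAt2_nonneg (f' := u') (f'' := u'') (convex_Icc _ _)
    (fun r hr => ((hu r (hsub hr)).continuousWithinAt).mono hsub) ?_ ?_ ?_
  · intro x hx
    rw [hint] at hx ⊢
    exact (hu x (hsub' hx)).mono hsub'
  · intro x hx
    rw [hint] at hx ⊢
    exact (hu' x (hsub' hx)).mono hsub'
  · intro x hx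
    rw [hint] at hx
    exact hpos x hx

/-- Maximum principle: a solution of `u'' + K u = 0` with `K ≤ 0` which is nonnegative
at both endpoints is nonnegative on the whole interval. -/
lemma jacobi_nonneg_aux {a b : ℝ} {K u u' u'' : ℝ → ℝ}
    (hKneg : ∀ r ∈ Set.Icc a b, K r ≤ 0)
    (hu : ∀ r ∈ Set.Icc a b, HasDerivWithinAt u (u' r) (Set.Icc a b) r)
    (hu' : ∀ r ∈ Set.Icc a b, HasDerivWithinAt u' (u'' r) (Set.Icc a b) r)
    (heq : ∀ r ∈ Set.Icc a b, u'' r + K r * u r = 0)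
    (ha : 0 ≤ u a) (hb : 0 ≤ u b) :
    ∀ r ∈ Set.Icc a b, 0 ≤ u r := by
  intro c hc
  by_contra hneg
  push_neg at hneg
  have hcont : ContinuousOn u (Set.Icc a b) := fun r hr => (hu r hr).continuousWithinAt
  have hIccac : Set.Icc a c ⊆ Set.Icc a b := Set.Icc_subset_Icc le_rfl hc.2
  have hIcccb : Set.Icc c b ⊆ Set.Icc a b := Set.Icc_subset_Icc hc.1 le_rfl
  have hAclosed : IsClosed (Set.Icc a c ∩ u ⁻¹' Set.Ici 0) :=
    (hcont.mono hIccac).preimage_isClosed_of_isClosed isClosed_Icc isClosed_Ici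
  have hBclosed : IsClosed (Set.Icc c b ∩ u ⁻¹' Set.Ici 0) :=
    (hcont.mono hIcccb).preimage_isClosed_of_isClosed isClosed_Icc isClosed_Ici
  have hAcomp : IsCompact (Set.Icc a c ∩ u ⁻¹' Set.Ici 0) :=
    isCompact_Icc.of_isClosed_subset hAclosed Set.inter_subset_left
  have hBcomp : IsCompact (Set.Icc c b ∩ u ⁻¹' Set.Ici 0) :=
    isCompact_Icc.of_isClosed_subset hBclosed Set.inter_subset_left
  have haA : a ∈ Set.Icc a c ∩ u ⁻¹' Set.Ici 0 := ⟨⟨le_rfl, hc.1⟩, ha⟩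
  have hbB : b ∈ Set.Icc c b ∩ u ⁻¹' Set.Ici 0 := ⟨⟨hc.2, le_rfl⟩, hb⟩
  have hx₀ : sSup (Set.Icc a c ∩ u ⁻¹' Set.Ici 0) ∈ Set.Icc a c ∩ u ⁻¹' Set.Ici 0 :=
    hAcomp.sSup_mem ⟨a, haA⟩
  have hy₀ : sInf (Set.Icc c b ∩ u ⁻¹' Set.Ici 0) ∈ Set.Icc c b ∩ u ⁻¹' Set.Ici 0 :=
    hBcomp.sInf_mem ⟨b, hbB⟩
  set x₀ := sSup (Set.Icc a c ∩ u ⁻¹' Set.Ici 0)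
  set y₀ := sInf (Set.Icc c b ∩ u ⁻¹' Set.Ici 0)
  have hx₀c : x₀ < c := lt_of_le_of_ne hx₀.1.2
    (fun h => absurd (show (0:ℝ) ≤ u c by rw [← h]; exact hx₀.2) (not_le.2 hneg))
  have hcy₀ : c < y₀ := lt_of_le_of_ne hy₀.1.1
    (fun h => absurd (show (0:ℝ) ≤ u c by rw [h]; exact hy₀.2) (not_le.2 hneg))
  -- u is nonpositive strictly between x₀ and y₀
  have hmid : ∀ r ∈ Set.Ioo x₀ y₀, u r ≤ 0 := by
    intro r hr
    by_contra hpos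
    push_neg at hpos
    rcases le_total r c with h | h
    · have hrA : r ∈ Set.Icc a c ∩ u ⁻¹' Set.Ici 0 :=
        ⟨⟨hx₀.1.1.trans hr.1.le, h⟩, hpos.le⟩
      exact absurd (le_csSup hAcomp.bddAbove hrA) (not_le.2 hr.1)
    · have hrB : r ∈ Set.Icc c b ∩ u ⁻¹' Set.Ici 0 :=
        ⟨⟨h, hr.2.le.trans hy₀.1.2⟩, hpos.le⟩
      exact absurd (csInf_le hBcomp.bddBelow hrB) (not_le.2 hr.2)
  -- hence u is concave on [x₀, y₀]
  have hsign : ∀ r ∈ Set.Ioo x₀ y₀, 0 ≤ -u'' r := by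
    intro r hr
    have hrmem : r ∈ Set.Icc a b := ⟨hx₀.1.1.trans hr.1.le, hr.2.le.trans hy₀.1.2⟩
    have h1 := heq r hrmem
    have h2 := hKneg r hrmem
    have h3 := hmid r hr
    nlinarith
  have hconv : ConvexOn ℝ (Set.Icc x₀ y₀) (fun r => -u r) :=
    jacobi_convexOn_aux (u := fun r => -u r) (u' := fun r => -u' r) (u'' := fun r => -u'' r)
      hx₀.1.1 hy₀.1.2 (fun r hr => (hu r hr).neg) (fun r hr => (hu' r hr).neg) hsign
  have hconc : ConcaveOn ℝ (Set.Icc x₀ y₀) u := by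
    refine ⟨convex_Icc _ _, fun x hx y hy p q hp hq hpq => ?_⟩
    have h2 := hconv.2 hx hy hp hq hpq
    simp only [smul_eq_mul] at h2 ⊢
    linarith
  have hcmem : c ∈ Set.Icc x₀ y₀ := ⟨hx₀c.le, hcy₀.le⟩
  have hmin := hconc.min_le_of_mem_Icc (Set.left_mem_Icc.2 (hx₀c.le.trans hcy₀.le))
    (Set.right_mem_Icc.2 (hx₀c.le.trans hcy₀.le)) hcmem
  have : (0 : ℝ) ≤ u c := le_trans (le_min hx₀.2 hy₀.2) hmin
  exact absurd this (not_le.2 hneg)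

/-- Chord bound for a convex function on `[a, 0]` with `a < 0`. -/
lemma jacobi_chord_aux {a : ℝ} (ha : a < 0) {u : ℝ → ℝ}
    (hconv : ConvexOn ℝ (Set.Icc a 0) u) {r : ℝ} (hr : r ∈ Set.Icc a 0) :
    u r ≤ (r / a) * u a + (1 - r / a) * u 0 := by
  have ht0 : 0 ≤ r / a := by
    rw [div_nonneg_iff]
    right
    exact ⟨hr.2, ha.le⟩
  have ht1 : r / a ≤ 1 := by
    rw [div_le_iff_of_neg ha]
    simpa using hr.1
  have hx : a ∈ Set.Icc a 0 := Set.left_mem_Icc.2 ha.le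
  have hy : (0 : ℝ) ∈ Set.Icc a 0 := Set.right_mem_Icc.2 ha.le
  have key := hconv.2 hx hy ht0 (show (0:ℝ) ≤ 1 - r / a by linarith)
    (by ring : r / a + (1 - r / a) = 1)
  simp only [smul_eq_mul, mul_zero, add_zero] at key
  rwa [div_mul_cancel₀ _ ha.ne] at key
/-- Monotonicity and closeness of the Jacobi solutions `h_s` vanishing at `-s`:
for `0 < s₁ < s₂`, the solutions with `hᵢ(-sᵢ) = 0`, `hᵢ(0) = 1` satisfy
`0 ≤ h₂(r) - h₁(r) ≤ -r(1/s₁ - 1/s₂)` on `[-s₁, 0]`. -/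
theorem stmt_8 (s₁ s₂ : ℝ) (hs₁ : 0 < s₁) (hs : s₁ < s₂)
    (K h₁ h₁' h₁'' h₂ h₂' h₂'' : ℝ → ℝ)
    (hK : ContinuousOn K (Set.Iic 0))
    (hKneg : ∀ r : ℝ, r ≤ 0 → K r ≤ 0)
    (hh₁ : ∀ r ∈ Set.Icc (-s₁) 0, HasDerivWithinAt h₁ (h₁' r) (Set.Icc (-s₁) 0) r)
    (hh₁' : ∀ r ∈ Set.Icc (-s₁) 0, HasDerivWithinAt h₁' (h₁'' r) (Set.Icc (-s₁) 0) r)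
    (hh₁'' : ContinuousOn h₁'' (Set.Icc (-s₁) 0))
    (heq₁ : ∀ r ∈ Set.Icc (-s₁) 0, h₁'' r + K r * h₁ r = 0)
    (hend₁ : h₁ (-s₁) = 0) (h₁0 : h₁ 0 = 1)
    (hh₂ : ∀ r ∈ Set.Icc (-s₂) 0, HasDerivWithinAt h₂ (h₂' r) (Set.Icc (-s₂) 0) r)
    (hh₂' : ∀ r ∈ Set.Icc (-s₂) 0, HasDerivWithinAt h₂' (h₂'' r) (Set.Icc (-s₂) 0) r)
    (hh₂'' : ContinuousOn h₂'' (Set.Icc (-s₂) 0))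
    (heq₂ : ∀ r ∈ Set.Icc (-s₂) 0, h₂'' r + K r * h₂ r = 0)
    (hend₂ : h₂ (-s₂) = 0) (h₂0 : h₂ 0 = 1) :
    ∀ r ∈ Set.Icc (-s₁) 0,
      0 ≤ h₂ r - h₁ r ∧ h₂ r - h₁ r ≤ -r * (1 / s₁ - 1 / s₂) := by
  have hs₂ : (0:ℝ) < s₂ := hs₁.trans hs
  have hsub : Set.Icc (-s₁) 0 ⊆ Set.Icc (-s₂) 0 :=
    Set.Icc_subset_Icc (by linarith) le_rfl
  have hK₂ : ∀ r ∈ Set.Icc (-s₂) 0, K r ≤ 0 := fun r hr => hKneg r hr.2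
  have hK₁ : ∀ r ∈ Set.Icc (-s₁) 0, K r ≤ 0 := fun r hr => hKneg r hr.2
  -- Step 1 : h₂ ≥ 0 on [-s₂, 0]
  have h₂nn : ∀ r ∈ Set.Icc (-s₂) 0, 0 ≤ h₂ r :=
    jacobi_nonneg_aux hK₂ hh₂ hh₂' heq₂ (hend₂.ge) (by rw [h₂0]; norm_num)
  -- Step 2 : u := h₂ - h₁ satisfies the equation on [-s₁, 0]
  have hu : ∀ r ∈ Set.Icc (-s₁) 0,
      HasDerivWithinAt (fun x => h₂ x - h₁ x) (h₂' r - h₁' r) (Set.Icc (-s₁) 0) r :=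
    fun r hr => (((hh₂ r (hsub hr)).mono hsub).sub (hh₁ r hr))
  have hu' : ∀ r ∈ Set.Icc (-s₁) 0,
      HasDerivWithinAt (fun x => h₂' x - h₁' x) (h₂'' r - h₁'' r) (Set.Icc (-s₁) 0) r :=
    fun r hr => (((hh₂' r (hsub hr)).mono hsub).sub (hh₁' r hr))
  have hueq : ∀ r ∈ Set.Icc (-s₁) 0,
      (h₂'' r - h₁'' r) + K r * (h₂ r - h₁ r) = 0 := by
    intro r hr
    have e1 := heq₁ r hr
    have e2 := heq₂ r (hsub hr)
    have e3 : K r * (h₂ r - h₁ r) = K r * h₂ r - K r * h₁ r := by ring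
    linarith
  have hends₁mem : (-s₁) ∈ Set.Icc (-s₂) 0 := ⟨by linarith, by linarith⟩
  -- Step 3 : u ≥ 0 on [-s₁, 0]
  have hunn : ∀ r ∈ Set.Icc (-s₁) 0, 0 ≤ h₂ r - h₁ r := by
    apply jacobi_nonneg_aux hK₁ hu hu' hueq
    · rw [hend₁, sub_zero]; exact h₂nn _ hends₁mem
    · rw [h₁0, h₂0]; norm_num
  -- Step 4 : h₂ is convex on [-s₂, 0], giving h₂(-s₁) ≤ 1 - s₁/s₂
  have h₂conv : ConvexOn ℝ (Set.Icc (-s₂) 0) h₂ := by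
    apply jacobi_convexOn_aux le_rfl le_rfl hh₂ hh₂'
    intro r hr
    have h1 := heq₂ r (Set.Ioo_subset_Icc_self hr)
    have h2 := hK₂ r (Set.Ioo_subset_Icc_self hr)
    have h3 := h₂nn r (Set.Ioo_subset_Icc_self hr)
    nlinarith
  have h₂bound : h₂ (-s₁) ≤ 1 - s₁ / s₂ := by
    have := jacobi_chord_aux (by linarith : -s₂ < 0) h₂conv hends₁mem
    rw [hend₂, h₂0] at this
    have hq : (-s₁) / (-s₂) = s₁ / s₂ := neg_div_neg_eq s₁ s₂
    rw [hq] at this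
    linarith
  -- Step 5 : u is convex on [-s₁, 0], giving the chord bound
  have huconv : ConvexOn ℝ (Set.Icc (-s₁) 0) (fun x => h₂ x - h₁ x) := by
    apply jacobi_convexOn_aux le_rfl le_rfl hu hu'
    intro r hr
    have h1 := hueq r (Set.Ioo_subset_Icc_self hr)
    have h2 := hK₁ r (Set.Ioo_subset_Icc_self hr)
    have h3 := hunn r (Set.Ioo_subset_Icc_self hr)
    nlinarith
  intro r hr
  refine ⟨hunn r hr, ?_⟩
  have hchord := jacobi_chord_aux (by linarith : -s₁ < 0) huconv hr
  simp only [hend₁, h₁0, h₂0, sub_zero, sub_self, mul_zero, add_zero] at hchord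
  have hq : r / (-s₁) = -r / s₁ := by rw [div_neg, neg_div]
  rw [hq] at hchord
  have hrle : -r / s₁ ≤ -r / s₁ := le_rfl
  have hrnn : 0 ≤ -r := by linarith [hr.2]
  have hfac : 0 ≤ -r / s₁ := div_nonneg hrnn hs₁.le
  have hfin : -r / s₁ * h₂ (-s₁) ≤ -r / s₁ * (1 - s₁ / s₂) :=
    mul_le_mul_of_nonneg_left h₂bound hfac
  have heqn : -r / s₁ * (1 - s₁ / s₂) = -r * (1 / s₁ - 1 / s₂) := by
    field_simp
  calc h₂ r - h₁ r ≤ -r / s₁ * h₂ (-s₁) := hchord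
    _ ≤ -r / s₁ * (1 - s₁ / s₂) := hfin
    _ = -r * (1 / s₁ - 1 / s₂) := heqn
end

section
/- Let K : (-∞, 0] → ℝ be continuous with K(r) ≤ 0 for all r ≤ 0. Then there exists a twice continuously differentiable function h : (-∞, 0] → ℝ with h''(r) + K(r)h(r) = 0 for all r ≤ 0, h(0) = 1, 0 < h(r) ≤ 1 for all r ≤ 0, and h'(0) ≥ 0. -/
/-!
With `t = -r` and `q t = -K (-t) ≥ 0` the equation becomes `u'' = q u` on `[0, ∞)`. Its
solution with `u 0 = 1`, `u' 0 = 0` is the Volterra series `u = ∑ vₙ`,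
`vₙ₊₁ t = ∫₀ᵗ ∫₀ˢ q vₙ`, dominated termwise by the series of `cosh (a t)` wherever `q ≤ a ^ 2`.
All terms are nonnegative, so `u ≥ 1` and `u` is convex. Reduction of order gives the second
solution `u J`, `J t = ∫₀ᵗ u⁻²`, and `J` increases to some `S ∈ (0, ∞]`. The bounded solution is
`g = u (1 - J / S)`: it is positive, and it decreases because comparing `u` with its tangent line
at `t` gives `u' u (S - J) ≤ 1`. Hence `g ≤ g 0 = 1`, and `g' 0 = -1 / S ≤ 0`.
-/

open MeasureTheory (volume)
open intervalIntegral Set Filter Topology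
open scoped Nat

theorem integral_le_mul_pow_div_factorial {f : ℝ → ℝ} {t C : ℝ} {k : ℕ}
    (hf : IntervalIntegrable f volume 0 t) (ht : 0 ≤ t)
    (hfC : ∀ s ∈ Icc 0 t, f s ≤ C * s ^ k / k !) :
    ∫ s in 0..t, f s ≤ C * t ^ (k + 1) / (k + 1)! := by
  calc ∫ s in 0..t, f s ≤ ∫ s in 0..t, C * s ^ k / k ! :=
        integral_mono_on ht hf (Continuous.intervalIntegrable (by fun_prop) 0 t) hfC
    _ = C * t ^ (k + 1) / (k + 1)! := by
        rw [integral_div, integral_const_mul, integral_pow, Nat.factorial_succ]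
        push_cast
        field_simp
        ring

theorem integral_zero_neg (f : ℝ → ℝ) (t : ℝ) :
    ∫ s in 0..-t, f s = -∫ s in 0..t, f (-s) := by
  rw [integral_comp_neg, neg_zero, integral_symm]

section Volterra

variable {q : ℝ → ℝ}

/-- For constant `q = a ^ 2` these are the terms `(a * t) ^ (2 * n) / (2 * n)!` of
`cosh (a * t)`. -/
noncomputable def volterraTerm (q : ℝ → ℝ) : ℕ → ℝ → ℝ
  | 0 => fun _ => 1
  | n + 1 => fun t => ∫ s in 0..t, ∫ r in 0..s, q r * volterraTerm q n r

noncomputable def volterraSlope (q : ℝ → ℝ) (n : ℕ) (t : ℝ) : ℝ :=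
  ∫ r in 0..t, q r * volterraTerm q n r

theorem volterraTerm_succ (n : ℕ) (t : ℝ) :
    volterraTerm q (n + 1) t = ∫ s in 0..t, volterraSlope q n s := rfl

theorem volterraTerm_neg (q : ℝ → ℝ) (n : ℕ) (t : ℝ) :
    volterraTerm q n (-t) = volterraTerm (fun s => q (-s)) n t := by
  induction n generalizing t with
  | zero => rfl
  | succ n ih =>
    simp only [volterraTerm_succ, volterraSlope, integral_zero_neg, ih, integral_neg, neg_neg]

theorem volterraSlope_neg (q : ℝ → ℝ) (n : ℕ) (t : ℝ) :
    volterraSlope q n (-t) = -volterraSlope (fun s => q (-s)) n t := by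
  simp only [volterraSlope, integral_zero_neg, volterraTerm_neg]

theorem continuous_volterraTerm (hq : Continuous q) : ∀ n, Continuous (volterraTerm q n)
  | 0 => continuous_const
  | n + 1 => continuous_primitive (continuous_primitive
      (hq.mul (continuous_volterraTerm hq n)).intervalIntegrable 0).intervalIntegrable 0

theorem continuous_volterraSlope (hq : Continuous q) (n : ℕ) :
    Continuous (volterraSlope q n) :=
  continuous_primitive (hq.mul (continuous_volterraTerm hq n)).intervalIntegrable 0

theorem hasDerivAt_volterraTerm_succ (hq : Continuous q) (n : ℕ) (t : ℝ) :
    HasDerivAt (volterraTerm q (n + 1)) (volterraSlope q n t) t :=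
  ((continuous_volterraSlope hq n).integral_hasStrictDerivAt 0 t).hasDerivAt

theorem hasDerivAt_volterraSlope (hq : Continuous q) (n : ℕ) (t : ℝ) :
    HasDerivAt (volterraSlope q n) (q t * volterraTerm q n t) t :=
  ((hq.mul (continuous_volterraTerm hq n)).integral_hasStrictDerivAt 0 t).hasDerivAt

theorem volterraTerm_nonneg_of_nonneg (hq0 : ∀ s, 0 ≤ q s) (n : ℕ) {t : ℝ} (ht : 0 ≤ t) :
    0 ≤ volterraTerm q n t := by
  induction n generalizing t with
  | zero => exact zero_le_one
  | succ n ih =>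
    exact integral_nonneg ht fun s hs =>
      integral_nonneg hs.1 fun r hr => mul_nonneg (hq0 r) (ih hr.1)

theorem volterraTerm_nonneg (hq0 : ∀ s, 0 ≤ q s) (n : ℕ) (t : ℝ) : 0 ≤ volterraTerm q n t := by
  rcases le_total 0 t with ht | ht
  · exact volterraTerm_nonneg_of_nonneg hq0 n ht
  · rw [← neg_neg t, volterraTerm_neg]
    exact volterraTerm_nonneg_of_nonneg (fun s => hq0 (-s)) n (neg_nonneg.2 ht)

section Bounds

variable {a : ℝ}

theorem volterraSlope_le (hq : Continuous q) (hq0 : ∀ s, 0 ≤ q s) {n : ℕ} {t : ℝ} (ht : 0 ≤ t)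
    (hqa : ∀ s ∈ Icc 0 t, q s ≤ a ^ 2)
    (hv : ∀ s ∈ Icc 0 t, volterraTerm q n s ≤ a ^ (2 * n) * s ^ (2 * n) / (2 * n)!) :
    volterraSlope q n t ≤ a ^ (2 * n + 2) * t ^ (2 * n + 1) / (2 * n + 1)! := by
  refine integral_le_mul_pow_div_factorial
    ((hq.mul (continuous_volterraTerm hq n)).intervalIntegrable 0 t) ht fun s hs => ?_
  calc q s * volterraTerm q n s ≤ a ^ 2 * (a ^ (2 * n) * s ^ (2 * n) / (2 * n)!) :=
        mul_le_mul (hqa s hs) (hv s hs) (volterraTerm_nonneg hq0 n s) (sq_nonneg a)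
    _ = a ^ (2 * n + 2) * s ^ (2 * n) / (2 * n)! := by ring

theorem volterraTerm_le (hq : Continuous q) (hq0 : ∀ s, 0 ≤ q s) (n : ℕ) {t : ℝ} (ht : 0 ≤ t)
    (hqa : ∀ s ∈ Icc 0 t, q s ≤ a ^ 2) :
    volterraTerm q n t ≤ a ^ (2 * n) * t ^ (2 * n) / (2 * n)! := by
  induction n generalizing t with
  | zero => simp [volterraTerm]
  | succ n ih =>
    rw [volterraTerm_succ, show 2 * (n + 1) = 2 * n + 1 + 1 by ring]
    refine integral_le_mul_pow_div_factorial
      ((continuous_volterraSlope hq n).intervalIntegrable 0 t) ht fun s hs => ?_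
    exact volterraSlope_le hq hq0 hs.1 (fun r hr => hqa r ⟨hr.1, hr.2.trans hs.2⟩)
      fun r hr => ih hr.1 fun x hx => hqa x ⟨hx.1, hx.2.trans (hr.2.trans hs.2)⟩

variable {T : ℝ}

theorem abs_volterraTerm_le (hq : Continuous q) (hq0 : ∀ s, 0 ≤ q s) (ha : 0 ≤ a)
    (hqa : ∀ s ∈ Icc (-T) T, q s ≤ a ^ 2) (n : ℕ) {t : ℝ} (ht : |t| ≤ T) :
    |volterraTerm q n t| ≤ (a * T) ^ (2 * n) / (2 * n)! := by
  wlog h0 : 0 ≤ t generalizing q t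
  · have := this (q := fun s => q (-s)) (hq.comp continuous_neg) (fun s => hq0 (-s))
      (fun s hs => hqa (-s) ⟨by linarith [hs.2], by linarith [hs.1]⟩) (t := -t)
      (by rwa [abs_neg]) (by linarith)
    rwa [← volterraTerm_neg, neg_neg] at this
  have htT : t ≤ T := (le_abs_self t).trans ht
  rw [abs_of_nonneg (volterraTerm_nonneg hq0 n t), mul_pow]
  calc _ ≤ a ^ (2 * n) * t ^ (2 * n) / (2 * n)! :=
        volterraTerm_le hq hq0 n h0 fun s hs => hqa s ⟨by linarith [hs.1], hs.2.trans htT⟩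
    _ ≤ _ := by gcongr

theorem abs_volterraSlope_le (hq : Continuous q) (hq0 : ∀ s, 0 ≤ q s) (ha : 0 ≤ a)
    (hqa : ∀ s ∈ Icc (-T) T, q s ≤ a ^ 2) (n : ℕ) {t : ℝ} (ht : |t| ≤ T) :
    |volterraSlope q n t| ≤ a * ((a * T) ^ (2 * n + 1) / (2 * n + 1)!) := by
  wlog h0 : 0 ≤ t generalizing q t
  · have := this (q := fun s => q (-s)) (hq.comp continuous_neg) (fun s => hq0 (-s))
      (fun s hs => hqa (-s) ⟨by linarith [hs.2], by linarith [hs.1]⟩) (t := -t)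
      (by rwa [abs_neg]) (by linarith)
    rwa [← abs_neg, ← volterraSlope_neg, neg_neg] at this
  have htT : t ≤ T := (le_abs_self t).trans ht
  have hqa' : ∀ s ∈ Icc 0 t, q s ≤ a ^ 2 := fun s hs =>
    hqa s ⟨by linarith [hs.1], hs.2.trans htT⟩
  have hslope : 0 ≤ volterraSlope q n t :=
    integral_nonneg h0 fun r _ => mul_nonneg (hq0 r) (volterraTerm_nonneg hq0 n r)
  rw [abs_of_nonneg hslope]
  calc _ ≤ a ^ (2 * n + 2) * t ^ (2 * n + 1) / (2 * n + 1)! :=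
        volterraSlope_le hq hq0 h0 hqa' fun s hs =>
          volterraTerm_le hq hq0 n hs.1 fun r hr => hqa' r ⟨hr.1, hr.2.trans hs.2⟩
    _ ≤ a ^ (2 * n + 2) * T ^ (2 * n + 1) / (2 * n + 1)! := by gcongr
    _ = _ := by ring

end Bounds

theorem exists_sq_bound (hq : Continuous q) (T : ℝ) :
    ∃ a, 0 ≤ a ∧ ∀ s ∈ Icc (-T) T, q s ≤ a ^ 2 := by
  obtain ⟨M, hM⟩ := isCompact_Icc.bddAbove_image hq.continuousOn
  refine ⟨√(max M 0), Real.sqrt_nonneg _, fun s hs => ?_⟩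
  rw [Real.sq_sqrt (le_max_right M 0)]
  exact (hM (mem_image_of_mem q hs)).trans (le_max_left M 0)

theorem summable_pow_two_mul_div_factorial (x : ℝ) :
    Summable fun n : ℕ => x ^ (2 * n) / (2 * n)! :=
  (Real.summable_pow_div_factorial x).comp_injective (mul_right_injective₀ two_ne_zero)

theorem summable_pow_two_mul_add_one_div_factorial (x : ℝ) :
    Summable fun n : ℕ => x ^ (2 * n + 1) / (2 * n + 1)! :=
  (Real.summable_pow_div_factorial x).comp_injective fun m n h => by simpa using h

theorem summable_volterraTerm (hq : Continuous q) (hq0 : ∀ s, 0 ≤ q s) (t : ℝ) :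
    Summable fun n => volterraTerm q n t := by
  obtain ⟨a, ha, hqa⟩ := exists_sq_bound hq |t|
  exact (summable_pow_two_mul_div_factorial _).of_norm_bounded fun n =>
    abs_volterraTerm_le hq hq0 ha hqa n le_rfl

noncomputable def coshSol (q : ℝ → ℝ) (t : ℝ) : ℝ := ∑' n, volterraTerm q n t

noncomputable def coshSolDeriv (q : ℝ → ℝ) (t : ℝ) : ℝ := ∑' n, volterraSlope q n t

theorem coshSol_zero : coshSol q 0 = 1 :=
  (tsum_eq_single 0 fun n hn => by
    obtain ⟨n, rfl⟩ := Nat.exists_eq_succ_of_ne_zero hn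
    exact integral_same).trans rfl

theorem coshSolDeriv_zero : coshSolDeriv q 0 = 0 := by
  simp [coshSolDeriv, volterraSlope]

theorem one_le_coshSol (hq : Continuous q) (hq0 : ∀ s, 0 ≤ q s) (t : ℝ) : 1 ≤ coshSol q t :=
  (summable_volterraTerm hq hq0 t).le_tsum 0 fun n _ => volterraTerm_nonneg hq0 n t

theorem hasDerivAt_coshSol (hq : Continuous q) (hq0 : ∀ s, 0 ≤ q s) (t : ℝ) :
    HasDerivAt (coshSol q) (coshSolDeriv q t) t := by
  set T := |t| + 1 with hTdef
  obtain ⟨a, ha, hqa⟩ := exists_sq_bound hq T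
  have hT : ∀ y ∈ Ioo (-T) T, |y| ≤ T := fun y hy => abs_le.2 ⟨hy.1.le, hy.2.le⟩
  have h0 : (0 : ℝ) ∈ Ioo (-T) T := ⟨by linarith [abs_nonneg t], by linarith [abs_nonneg t]⟩
  have ht : t ∈ Ioo (-T) T := ⟨by linarith [neg_abs_le t], by linarith [le_abs_self t]⟩
  have hsplit : coshSol q = fun y => 1 + ∑' n, volterraTerm q (n + 1) y :=
    funext fun y => (summable_volterraTerm hq hq0 y).tsum_eq_zero_add
  rw [hsplit, ← zero_add (coshSolDeriv q t)]
  refine (hasDerivAt_const t 1).add (hasDerivAt_tsum_of_isPreconnected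
    ((summable_pow_two_mul_add_one_div_factorial (a * T)).mul_left a) isOpen_Ioo
    isPreconnected_Ioo (fun n y _ => hasDerivAt_volterraTerm_succ hq n y)
    (fun n y hy => abs_volterraSlope_le hq hq0 ha hqa n (hT y hy)) h0 ?_ ht)
  simp [volterraTerm_succ, volterraSlope]

theorem hasDerivAt_coshSolDeriv (hq : Continuous q) (hq0 : ∀ s, 0 ≤ q s) (t : ℝ) :
    HasDerivAt (coshSolDeriv q) (q t * coshSol q t) t := by
  set T := |t| + 1 with hTdef
  obtain ⟨a, ha, hqa⟩ := exists_sq_bound hq T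
  have hT : ∀ y ∈ Ioo (-T) T, |y| ≤ T := fun y hy => abs_le.2 ⟨hy.1.le, hy.2.le⟩
  have h0 : (0 : ℝ) ∈ Ioo (-T) T := ⟨by linarith [abs_nonneg t], by linarith [abs_nonneg t]⟩
  have ht : t ∈ Ioo (-T) T := ⟨by linarith [neg_abs_le t], by linarith [le_abs_self t]⟩
  rw [coshSol, ← tsum_mul_left]
  refine hasDerivAt_tsum_of_isPreconnected
    ((summable_pow_two_mul_div_factorial (a * T)).mul_left (a ^ 2)) isOpen_Ioo
    isPreconnected_Ioo (fun n y _ => hasDerivAt_volterraSlope hq n y) (fun n y hy => ?_) h0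
    (by simp [volterraSlope]) ht
  rw [norm_mul, Real.norm_eq_abs, abs_of_nonneg (hq0 y)]
  exact mul_le_mul (hqa y (Ioo_subset_Icc_self hy)) (abs_volterraTerm_le hq hq0 ha hqa n (hT y hy))
    (abs_nonneg _) (sq_nonneg a)

end Volterra

structure IsCoshSolution (q u p : ℝ → ℝ) : Prop where
  hasDerivAt : ∀ t, HasDerivAt u (p t) t
  hasDerivAt_deriv : ∀ t, HasDerivAt p (q t * u t) t
  apply_zero : u 0 = 1
  deriv_zero : p 0 = 0
  one_le : ∀ t, 1 ≤ u t

theorem isCoshSolution_coshSol {q : ℝ → ℝ} (hq : Continuous q) (hq0 : ∀ s, 0 ≤ q s) :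
    IsCoshSolution q (coshSol q) (coshSolDeriv q) :=
  ⟨hasDerivAt_coshSol hq hq0, hasDerivAt_coshSolDeriv hq hq0, coshSol_zero, coshSolDeriv_zero,
    one_le_coshSol hq hq0⟩

noncomputable def invSqIntegral (u : ℝ → ℝ) (t : ℝ) : ℝ := ∫ s in 0..t, (u s ^ 2)⁻¹

namespace IsCoshSolution

variable {q u p : ℝ → ℝ} (hs : IsCoshSolution q u p)
include hs

theorem pos (t : ℝ) : 0 < u t := zero_lt_one.trans_le (hs.one_le t)

theorem continuous : Continuous u :=
  continuous_iff_continuousAt.2 fun t => (hs.hasDerivAt t).continuousAt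

theorem monotone_deriv (hq0 : ∀ t, 0 ≤ q t) : Monotone p :=
  monotone_of_hasDerivAt_nonneg hs.hasDerivAt_deriv fun t => mul_nonneg (hq0 t) (hs.pos t).le

theorem deriv_nonneg (hq0 : ∀ t, 0 ≤ q t) {t : ℝ} (ht : 0 ≤ t) : 0 ≤ p t :=
  hs.deriv_zero ▸ hs.monotone_deriv hq0 ht

theorem add_mul_sub_le (hq0 : ∀ t, 0 ≤ q t) {t s : ℝ} (hts : t ≤ s) :
    u t + p t * (s - t) ≤ u s := by
  have hw : ∀ y, HasDerivAt (fun y => u y - p t * y) (p y - p t * 1) y := fun y =>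
    (hs.hasDerivAt y).sub ((hasDerivAt_id y).const_mul (p t))
  have hmono : MonotoneOn (fun y => u y - p t * y) (Ici t) :=
    monotoneOn_of_hasDerivWithinAt_nonneg (convex_Ici t)
      (fun y _ => (hw y).continuousAt.continuousWithinAt) (fun y _ => (hw y).hasDerivWithinAt)
      fun y hy => by
        rw [interior_Ici] at hy
        simpa using hs.monotone_deriv hq0 (le_of_lt hy)
  have := hmono self_mem_Ici hts hts
  simp only at this
  linarith

theorem hasDerivAt_invSqIntegral (t : ℝ) :
    HasDerivAt (invSqIntegral u) (u t ^ 2)⁻¹ t :=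
  ((hs.continuous.pow 2).inv₀ fun s => (pow_pos (hs.pos s) 2).ne')
    |>.integral_hasStrictDerivAt 0 t |>.hasDerivAt

theorem strictMono_invSqIntegral : StrictMono (invSqIntegral u) :=
  strictMono_of_hasDerivAt_pos hs.hasDerivAt_invSqIntegral fun t => by
    have := hs.pos t
    positivity

/-- The tangent line `ℓ` of `u` at `t` lies below `u`, and `∫ₜ^∞ ℓ⁻² = (p t * u t)⁻¹`. -/
theorem mul_sub_invSqIntegral_le_one (hq0 : ∀ t, 0 ≤ q t) {t T : ℝ} (ht : 0 ≤ t)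
    (htT : t ≤ T) : p t * u t * (invSqIntegral u T - invSqIntegral u t) ≤ 1 := by
  set J := invSqIntegral u
  set ℓ : ℝ → ℝ := fun s => u t + p t * (s - t)
  have hpt := hs.deriv_nonneg hq0 ht
  have hℓ : ∀ s, t ≤ s → 0 < ℓ s := fun s hs' => by
    have := hs.pos t
    have : 0 ≤ p t * (s - t) := mul_nonneg hpt (sub_nonneg.2 hs')
    positivity
  set G : ℝ → ℝ := fun s => p t * u t * (J s - J t) + u t * (ℓ s)⁻¹
  set G' : ℝ → ℝ := fun s => p t * u t * ((u s ^ 2)⁻¹ - (ℓ s ^ 2)⁻¹)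
  have hG : ∀ s, t ≤ s → HasDerivAt G (G' s) s := fun s hs' => by
    have hℓ' : HasDerivAt ℓ (p t * 1) s :=
      (((hasDerivAt_id s).sub_const t).const_mul (p t)).const_add (u t)
    refine ((((hs.hasDerivAt_invSqIntegral s).sub_const (J t)).const_mul (p t * u t)).add
      ((hℓ'.inv (hℓ s hs').ne').const_mul (u t))).congr_deriv ?_
    ring
  have hG'_nonpos : ∀ s, t ≤ s → G' s ≤ 0 := fun s hs' => by
    have h1 := hℓ s hs'
    have h2 : ℓ s ≤ u s := hs.add_mul_sub_le hq0 hs'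
    have : (u s ^ 2)⁻¹ ≤ (ℓ s ^ 2)⁻¹ := by gcongr
    exact mul_nonpos_of_nonneg_of_nonpos (mul_nonneg hpt (hs.pos t).le) (sub_nonpos.2 this)
  have hanti : AntitoneOn G (Ici t) :=
    antitoneOn_of_hasDerivWithinAt_nonpos (convex_Ici t)
      (fun s hs' => (hG s hs').continuousAt.continuousWithinAt)
      (fun s hs' => (hG s (interior_subset hs')).hasDerivWithinAt)
      fun s hs' => hG'_nonpos s (interior_subset hs')
  have hGT : G T ≤ G t := hanti self_mem_Ici htT htT
  have hGt : G t = 1 := by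
    simp only [G, ℓ, sub_self, mul_zero, add_zero, zero_add]
    exact mul_inv_cancel₀ (hs.pos t).ne'
  have : 0 ≤ u t * (ℓ T)⁻¹ := mul_nonneg (hs.pos t).le (inv_nonneg.2 (hℓ T htT).le)
  simp only [G] at hGT
  linarith

theorem exists_decay_const (hq0 : ∀ t, 0 ≤ q t) :
    ∃ c, 0 ≤ c ∧ ∀ t, 0 ≤ t →
      c * invSqIntegral u t < 1 ∧ p t * (1 - c * invSqIntegral u t) ≤ c / u t := by
  set J := invSqIntegral u
  have hJ0 : J 0 = 0 := integral_same
  rcases tendsto_atTop_of_monotone hs.strictMono_invSqIntegral.monotone with hJ | ⟨S, hJ⟩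
  · refine ⟨0, le_rfl, fun t ht => ⟨by simp, ?_⟩⟩
    simp only [zero_mul, sub_zero, mul_one, zero_div]
    by_contra! hp
    have hpu : 0 < p t * u t := mul_pos hp (hs.pos t)
    obtain ⟨T, hJT, htT⟩ :=
      ((tendsto_atTop.1 hJ (J t + (p t * u t)⁻¹ + 1)).and (eventually_ge_atTop t)).exists
    have : 1 < p t * u t * (J T - J t) := by
      rw [← mul_inv_cancel₀ hpu.ne']
      gcongr
      linarith
    linarith [hs.mul_sub_invSqIntegral_le_one hq0 ht htT]
  · have hJS : ∀ t, J t < S := fun t =>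
      (hs.strictMono_invSqIntegral (lt_add_one t)).trans_le
        (hs.strictMono_invSqIntegral.monotone.ge_of_tendsto hJ (t + 1))
    have hS : 0 < S := hJ0 ▸ hJS 0
    refine ⟨S⁻¹, inv_nonneg.2 hS.le, fun t ht => ⟨?_, ?_⟩⟩
    · rw [inv_mul_lt_iff₀ hS, mul_one]
      exact hJS t
    · have hlim : p t * u t * (S - J t) ≤ 1 :=
        le_of_tendsto ((hJ.sub_const (J t)).const_mul (p t * u t))
          ((eventually_ge_atTop t).mono fun _ htT => hs.mul_sub_invSqIntegral_le_one hq0 ht htT)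
      have hu := hs.pos t
      rw [le_div_iff₀ hu]
      calc p t * (1 - S⁻¹ * J t) * u t = S⁻¹ * (p t * u t * (S - J t)) := by field_simp
        _ ≤ S⁻¹ * 1 := by gcongr
        _ = S⁻¹ := mul_one _

theorem exists_bounded_solution (hq0 : ∀ t, 0 ≤ q t) :
    ∃ g g' : ℝ → ℝ, (∀ t, HasDerivAt g (g' t) t) ∧ (∀ t, HasDerivAt g' (q t * g t) t) ∧
      g 0 = 1 ∧ g' 0 ≤ 0 ∧ ∀ t, 0 ≤ t → 0 < g t ∧ g t ≤ 1 := by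
  obtain ⟨c, hc, hcJ⟩ := hs.exists_decay_const hq0
  set J := invSqIntegral u
  have hJ0 : J 0 = 0 := integral_same
  set g : ℝ → ℝ := fun t => u t * (1 - c * J t)
  set g' : ℝ → ℝ := fun t => p t * (1 - c * J t) - c / u t
  have hdJ : ∀ t, HasDerivAt (fun t => 1 - c * J t) (-(c * (u t ^ 2)⁻¹)) t := fun t =>
    ((hs.hasDerivAt_invSqIntegral t).const_mul c).const_sub 1
  have hg : ∀ t, HasDerivAt g (g' t) t := fun t => by
    have hu := (hs.pos t).ne'
    refine ((hs.hasDerivAt t).mul (hdJ t)).congr_deriv ?_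
    simp only [g']
    field_simp
    ring
  have hg' : ∀ t, HasDerivAt g' (q t * g t) t := fun t => by
    have hu := (hs.pos t).ne'
    refine (((hs.hasDerivAt_deriv t).mul (hdJ t)).sub
      ((hasDerivAt_const t c).div (hs.hasDerivAt t) hu)).congr_deriv ?_
    simp only [g]
    field_simp
    ring
  have hg0 : g 0 = 1 := by simp [g, hJ0, hs.apply_zero]
  have hanti : AntitoneOn g (Ici 0) :=
    antitoneOn_of_hasDerivWithinAt_nonpos (convex_Ici 0)
      (fun t _ => (hg t).continuousAt.continuousWithinAt)
      (fun t _ => (hg t).hasDerivWithinAt) fun t ht => by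
        rw [interior_Ici] at ht
        exact sub_nonpos.2 (hcJ t (le_of_lt ht)).2
  refine ⟨g, g', hg, hg', hg0, ?_, fun t ht => ⟨?_, hg0 ▸ hanti self_mem_Ici ht ht⟩⟩
  · simpa [g', hJ0, hs.deriv_zero, hs.apply_zero] using hc
  · exact mul_pos (hs.pos t) (sub_pos.2 (hcJ t ht).1)

end IsCoshSolution

theorem HasDerivAt.comp_neg {𝕜 F : Type*} [NontriviallyNormedField 𝕜] [NormedAddCommGroup F]
    [NormedSpace 𝕜 F] {f : 𝕜 → F} {f' : F} {x : 𝕜} (hf : HasDerivAt f f' (-x)) :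
    HasDerivAt (fun x => f (-x)) (-f') x := by
  simpa [Function.comp_def] using hf.scomp x (hasDerivAt_neg x)

/-- Existence of the bounded solution of the scalar Jacobi equation `h'' + Kh = 0`
on `(-∞, 0]` with `h(0) = 1`, `0 < h ≤ 1`, and `h'(0) ≥ 0` (nonpositive potential). -/
theorem stmt_9 (K : ℝ → ℝ)
    (hK : ContinuousOn K (Set.Iic 0))
    (hKneg : ∀ r : ℝ, r ≤ 0 → K r ≤ 0) :
    ∃ h h' h'' : ℝ → ℝ,
      (∀ r : ℝ, r ≤ 0 → HasDerivWithinAt h (h' r) (Set.Iic 0) r) ∧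
      (∀ r : ℝ, r ≤ 0 → HasDerivWithinAt h' (h'' r) (Set.Iic 0) r) ∧
      ContinuousOn h'' (Set.Iic 0) ∧
      (∀ r : ℝ, r ≤ 0 → h'' r + K r * h r = 0) ∧
      h 0 = 1 ∧
      (∀ r : ℝ, r ≤ 0 → 0 < h r ∧ h r ≤ 1) ∧
      0 ≤ h' 0 := by
  set q : ℝ → ℝ := fun t => -K (min (-t) 0)
  have hq : Continuous q :=
    (hK.comp_continuous (continuous_neg.min continuous_const) fun _ =>
      mem_Iic.2 (min_le_right _ _)).neg
  have hq0 : ∀ t, 0 ≤ q t := fun t => neg_nonneg.2 (hKneg _ (min_le_right _ _))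
  obtain ⟨g, g', hg, hg', hg0, hg'0, hg_bound⟩ :=
    (isCoshSolution_coshSol hq hq0).exists_bounded_solution hq0
  have hg_cont : Continuous g := continuous_iff_continuousAt.2 fun t => (hg t).continuousAt
  refine ⟨fun r => g (-r), fun r => -g' (-r), fun r => q (-r) * g (-r), fun r _ => ?_,
    fun r _ => ?_, ((hq.comp continuous_neg).mul (hg_cont.comp continuous_neg)).continuousOn,
    fun r hr => ?_, by simpa using hg0, fun r hr => hg_bound (-r) (neg_nonneg.2 hr),
    by simpa using hg'0⟩
  · exact (hg (-r)).comp_neg.hasDerivWithinAt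
  · simpa using (hg' (-r)).comp_neg.fun_neg.hasDerivWithinAt
  · simp [q, min_eq_left hr]
end

section
/- Let K : (-∞, 0] → ℝ be continuous with K(r) ≤ 0 for all r ≤ 0, and let s₀ > 0. Let h_∞ : (-∞, 0] → ℝ be a twice continuously differentiable solution of h'' + Kh = 0 with h_∞(0) = 1 and 0 < h_∞(r) ≤ 1 for all r ≤ 0, and let h : [-s₀, 0] → ℝ be the twice continuously differentiable solution of h'' + Kh = 0 with h(-s₀) = 0 and h(0) = 1. Then |h_∞(r) − h(r)| ≤ -r/s₀ for all r ∈ [-s₀, 0]. -/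
/-!
The difference `g = h_∞ - h` solves the same equation `g'' = -K g`, so `g'' g = -K g² ≥ 0`:
`g` is convex where it is positive and concave where it is negative. Such a function cannot
leave the cone `|g r| ≤ -r / s₀` spanned by its endpoint values `|g (-s₀)| ≤ 1` and `g 0 = 0`,
because on a maximal interval where it did, `-r / s₀ ∓ g` would be concave, nonnegative at
both ends, and negative inside.
-/

open Set

theorem exists_Icc_nonneg_ends_neg_interior {a b c : ℝ} {w : ℝ → ℝ}
    (hw : ContinuousOn w (Icc a b)) (ha : 0 ≤ w a) (hb : 0 ≤ w b) (hc : c ∈ Icc a b) :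
    ∃ α β, a ≤ α ∧ β ≤ b ∧ c ∈ Icc α β ∧ 0 ≤ w α ∧ 0 ≤ w β ∧ ∀ x ∈ Ioo α β, w x < 0 := by
  set L := Icc a c ∩ w ⁻¹' Ici 0
  set R := Icc c b ∩ w ⁻¹' Ici 0
  have hL : IsCompact L := isCompact_Icc.of_isClosed_subset
    ((hw.mono (Icc_subset_Icc_right hc.2)).preimage_isClosed_of_isClosed isClosed_Icc
      isClosed_Ici) inter_subset_left
  have hR : IsCompact R := isCompact_Icc.of_isClosed_subset
    ((hw.mono (Icc_subset_Icc_left hc.1)).preimage_isClosed_of_isClosed isClosed_Icc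
      isClosed_Ici) inter_subset_left
  obtain ⟨⟨haα, hαc⟩, hwα⟩ : sSup L ∈ L := hL.sSup_mem ⟨a, ⟨le_rfl, hc.1⟩, ha⟩
  obtain ⟨⟨hcβ, hβb⟩, hwβ⟩ : sInf R ∈ R := hR.sInf_mem ⟨b, ⟨hc.2, le_rfl⟩, hb⟩
  refine ⟨sSup L, sInf R, haα, hβb, ⟨hαc, hcβ⟩, hwα, hwβ, fun x hx => ?_⟩
  by_contra! hwx
  rcases le_total x c with hxc | hcx
  · exact (le_csSup hL.bddAbove ⟨⟨haα.trans hx.1.le, hxc⟩, hwx⟩).not_gt hx.1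
  · exact (csInf_le hR.bddBelow ⟨⟨hcx, hx.2.le.trans hβb⟩, hwx⟩).not_gt hx.2

theorem nonneg_of_deriv2_nonpos_of_neg {a b : ℝ} {w w' w'' : ℝ → ℝ}
    (hw : ContinuousOn w (Icc a b)) (hw' : ∀ x ∈ Ioo a b, HasDerivAt w (w' x) x)
    (hw'' : ∀ x ∈ Ioo a b, HasDerivAt w' (w'' x) x)
    (hneg : ∀ x ∈ Ioo a b, w x < 0 → w'' x ≤ 0) (ha : 0 ≤ w a) (hb : 0 ≤ w b) :
    ∀ x ∈ Icc a b, 0 ≤ w x := by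
  intro c hc
  by_contra! hwc
  obtain ⟨α, β, haα, hβb, hcαβ, hwα, hwβ, hwneg⟩ :=
    exists_Icc_nonneg_ends_neg_interior hw ha hb hc
  have hsub : Ioo α β ⊆ Ioo a b := Ioo_subset_Ioo haα hβb
  have hconc : ConcaveOn ℝ (Icc α β) w := by
    refine concaveOn_of_hasDerivWithinAt2_nonpos (f' := w') (f'' := w'') (convex_Icc α β)
      (hw.mono (Icc_subset_Icc haα hβb)) ?_ ?_ ?_ <;> rw [interior_Icc] <;> intro x hx
    · exact (hw' x (hsub hx)).hasDerivWithinAt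
    · exact (hw'' x (hsub hx)).hasDerivWithinAt
    · exact hneg x (hsub hx) (hwneg x hx)
  have := hconc.min_le_of_mem_Icc (left_mem_Icc.2 (hcαβ.1.trans hcαβ.2))
    (right_mem_Icc.2 (hcαβ.1.trans hcαβ.2)) hcαβ
  linarith [le_min hwα hwβ]

theorem le_affine_of_mul_deriv2_nonneg {a b c d : ℝ} {g g' g'' : ℝ → ℝ}
    (hg : ContinuousOn g (Icc a b)) (hg' : ∀ x ∈ Ioo a b, HasDerivAt g (g' x) x)
    (hg'' : ∀ x ∈ Ioo a b, HasDerivAt g' (g'' x) x) (hgg'' : ∀ x ∈ Ioo a b, 0 ≤ g x * g'' x)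
    (hℓ : ∀ x ∈ Ioo a b, 0 ≤ c + d * x) (ha : g a ≤ c + d * a) (hb : g b ≤ c + d * b) :
    ∀ x ∈ Icc a b, g x ≤ c + d * x := by
  have hℓ' (x : ℝ) : HasDerivAt (fun x => c + d * x) d x := by
    simpa using ((hasDerivAt_id x).const_mul d).const_add c
  have key := nonneg_of_deriv2_nonpos_of_neg (w := fun x => c + d * x - g x)
    (w' := fun x => d - g' x) (w'' := fun x => -g'' x)
    ((continuous_const.add (continuous_const.mul continuous_id)).continuousOn.sub hg)
    (fun x hx => (hℓ' x).sub (hg' x hx))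
    (fun x hx => (hg'' x hx).const_sub d)
    (fun x hx hwx => by
      have hgx : 0 < g x := by linarith [hℓ x hx]
      linarith [(mul_nonneg_iff_of_pos_left hgx).1 (hgg'' x hx)])
    (by linarith) (by linarith)
  exact fun x hx => by linarith [key x hx]

theorem abs_le_affine_of_mul_deriv2_nonneg {a b c d : ℝ} {g g' g'' : ℝ → ℝ}
    (hg : ContinuousOn g (Icc a b)) (hg' : ∀ x ∈ Ioo a b, HasDerivAt g (g' x) x)
    (hg'' : ∀ x ∈ Ioo a b, HasDerivAt g' (g'' x) x) (hgg'' : ∀ x ∈ Ioo a b, 0 ≤ g x * g'' x)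
    (ha : |g a| ≤ c + d * a) (hb : |g b| ≤ c + d * b) :
    ∀ x ∈ Icc a b, |g x| ≤ c + d * x := by
  have hℓ : ∀ x ∈ Ioo a b, 0 ≤ c + d * x := fun x hx => by
    nlinarith [abs_nonneg (g a), abs_nonneg (g b), hx.1, hx.2]
  rw [abs_le'] at ha hb
  intro x hx
  rw [abs_le']
  refine ⟨le_affine_of_mul_deriv2_nonneg hg hg' hg'' hgg'' hℓ ha.1 hb.1 x hx,
    le_affine_of_mul_deriv2_nonneg (g := fun x => -g x) hg.neg (fun x hx => (hg' x hx).neg)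
      (fun x hx => (hg'' x hx).neg) (fun x hx => ?_) hℓ ha.2 hb.2 x hx⟩
  simpa only [neg_mul_neg] using hgg'' x hx

theorem stmt_10_general (s₀ : ℝ) (hs₀ : 0 < s₀) (K hinf hinf' hinf'' h h' h'' : ℝ → ℝ)
    (hKneg : ∀ r : ℝ, r ≤ 0 → K r ≤ 0)
    (hhinf : ∀ r : ℝ, r ≤ 0 → HasDerivWithinAt hinf (hinf' r) (Set.Iic 0) r)
    (hhinf' : ∀ r : ℝ, r ≤ 0 → HasDerivWithinAt hinf' (hinf'' r) (Set.Iic 0) r)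
    (heqinf : ∀ r : ℝ, r ≤ 0 → hinf'' r + K r * hinf r = 0)
    (hinf0 : hinf 0 = 1)
    (hinfbd : ∀ r : ℝ, r ≤ 0 → 0 < hinf r ∧ hinf r ≤ 1)
    (hh : ∀ r ∈ Set.Icc (-s₀) 0, HasDerivWithinAt h (h' r) (Set.Icc (-s₀) 0) r)
    (hh' : ∀ r ∈ Set.Icc (-s₀) 0, HasDerivWithinAt h' (h'' r) (Set.Icc (-s₀) 0) r)
    (heq : ∀ r ∈ Set.Icc (-s₀) 0, h'' r + K r * h r = 0)
    (hend : h (-s₀) = 0) (h0 : h 0 = 1) :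
    ∀ r ∈ Set.Icc (-s₀) 0, |hinf r - h r| ≤ -r / s₀ := by
  have hnhds {x : ℝ} (hx : x ∈ Ioo (-s₀) 0) : Icc (-s₀) 0 ∈ nhds x := Icc_mem_nhds hx.1 hx.2
  have hbound := abs_le_affine_of_mul_deriv2_nonneg (c := 0) (d := -s₀⁻¹)
    (g := fun r => hinf r - h r) (g' := fun r => hinf' r - h' r)
    (g'' := fun r => hinf'' r - h'' r)
    (fun r hr => ((hhinf r hr.2).continuousWithinAt.mono fun _ hx => hx.2).sub
      (hh r hr).continuousWithinAt)
    (fun r hr => ((hhinf r hr.2.le).hasDerivAt (Iic_mem_nhds hr.2)).sub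
      ((hh r (Ioo_subset_Icc_self hr)).hasDerivAt (hnhds hr)))
    (fun r hr => ((hhinf' r hr.2.le).hasDerivAt (Iic_mem_nhds hr.2)).sub
      ((hh' r (Ioo_subset_Icc_self hr)).hasDerivAt (hnhds hr)))
    (fun r hr => by
      have hg'' : hinf'' r - h'' r = -K r * (hinf r - h r) := by
        linear_combination heqinf r hr.2.le - heq r (Ioo_subset_Icc_self hr)
      rw [hg'']
      nlinarith [mul_nonneg (neg_nonneg.2 (hKneg r hr.2.le)) (sq_nonneg (hinf r - h r))])
    (by
      have := hinfbd (-s₀) (by linarith)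
      rw [hend, sub_zero, abs_of_pos this.1]
      field_simp
      linarith)
    (by simp [hinf0, h0])
  intro r hr
  convert hbound r hr using 1
  field_simp
  ring

/-- Quantitative approximation of the bounded Jacobi solution `h_∞` by the solution
`h` vanishing at `-s₀`: `|h_∞(r) - h(r)| ≤ -r/s₀` on `[-s₀, 0]`. -/
theorem stmt_10 (s₀ : ℝ) (hs₀ : 0 < s₀) (K hinf hinf' hinf'' h h' h'' : ℝ → ℝ)
    (hK : ContinuousOn K (Set.Iic 0))
    (hKneg : ∀ r : ℝ, r ≤ 0 → K r ≤ 0)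
    (hhinf : ∀ r : ℝ, r ≤ 0 → HasDerivWithinAt hinf (hinf' r) (Set.Iic 0) r)
    (hhinf' : ∀ r : ℝ, r ≤ 0 → HasDerivWithinAt hinf' (hinf'' r) (Set.Iic 0) r)
    (hhinf'' : ContinuousOn hinf'' (Set.Iic 0))
    (heqinf : ∀ r : ℝ, r ≤ 0 → hinf'' r + K r * hinf r = 0)
    (hinf0 : hinf 0 = 1)
    (hinfbd : ∀ r : ℝ, r ≤ 0 → 0 < hinf r ∧ hinf r ≤ 1)
    (hh : ∀ r ∈ Set.Icc (-s₀) 0, HasDerivWithinAt h (h' r) (Set.Icc (-s₀) 0) r)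
    (hh' : ∀ r ∈ Set.Icc (-s₀) 0, HasDerivWithinAt h' (h'' r) (Set.Icc (-s₀) 0) r)
    (hh'' : ContinuousOn h'' (Set.Icc (-s₀) 0))
    (heq : ∀ r ∈ Set.Icc (-s₀) 0, h'' r + K r * h r = 0)
    (hend : h (-s₀) = 0) (h0 : h 0 = 1) :
    ∀ r ∈ Set.Icc (-s₀) 0, |hinf r - h r| ≤ -r / s₀ :=
  stmt_10_general s₀ hs₀ K hinf hinf' hinf'' h h' h'' hKneg hhinf hhinf' heqinf hinf0 hinfbd hh hh'
    heq hend h0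
end

section
/- Let K : [0, 1] → ℝ be continuous with K(r) ≤ 0 for all r ∈ [0, 1], and let h : [0, 1] → ℝ be twice continuously differentiable with h''(r) + K(r)h(r) = 0 on [0, 1], h(0) = 1, and h(1) = 0. Then 0 ≤ h(r) ≤ 1 − r for all r ∈ [0, 1], and −1 ≤ h'(1) ≤ 0. -/
/-!
Since `K ≤ 0`, the equation `h'' = -K h` makes `h` concave wherever `h < 0`. A negative minimum
of `h` is then impossible: `h` would be concave with zero derivative on the stretch from the
minimum to the next zero, so it could not climb back to `0`. Hence `h ≥ 0`, so `h'' ≥ 0` and `h`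
is convex: it lies below the chord `1 - r`, and its left derivative at `1` is at least the chord's
slope `-1`, and at most `0` because `1` is a minimum of `h ≥ 0`.
-/

open Set

theorem ContinuousOn.exists_first_zero {f : ℝ → ℝ} {a b : ℝ} (hab : a ≤ b)
    (hf : ContinuousOn f (Icc a b)) (ha : f a < 0) (hb : 0 ≤ f b) :
    ∃ z ∈ Ioc a b, f z = 0 ∧ ∀ x ∈ Ico a z, f x < 0 := by
  set Z := Icc a b ∩ f ⁻¹' {0}
  have hZ_closed : IsClosed Z := hf.preimage_isClosed_of_isClosed isClosed_Icc isClosed_singleton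
  have hZ_bdd : BddBelow Z := ⟨a, fun x hx => hx.1.1⟩
  have hZ_ne : Z.Nonempty := by
    obtain ⟨x, hx, hfx⟩ := intermediate_value_Icc hab hf ⟨ha.le, hb⟩
    exact ⟨x, hx, hfx⟩
  obtain ⟨⟨hz_a, hz_b⟩, hfz : f (sInf Z) = 0⟩ := hZ_closed.csInf_mem hZ_ne hZ_bdd
  have hz_a' : a < sInf Z := lt_of_le_of_ne hz_a (by rintro h; rw [← h] at hfz; linarith)
  refine ⟨sInf Z, ⟨hz_a', hz_b⟩, hfz, fun x hx => ?_⟩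
  by_contra! hfx
  obtain ⟨y, hy, hfy⟩ := intermediate_value_Icc hx.1
    (hf.mono (Icc_subset_Icc_right (hx.2.le.trans hz_b))) ⟨ha.le, hfx⟩
  have : sInf Z ≤ y := csInf_le hZ_bdd ⟨⟨hy.1, hy.2.trans (hx.2.le.trans hz_b)⟩, hfy⟩
  linarith [hy.2, hx.2]

theorem nonneg_of_hasDerivAt2_nonpos_of_neg {f f' f'' : ℝ → ℝ} {a b : ℝ}
    (hf : ContinuousOn f (Icc a b)) (hf' : ∀ x ∈ Ioo a b, HasDerivAt f (f' x) x)
    (hf'' : ∀ x ∈ Ioo a b, HasDerivAt f' (f'' x) x) (ha : 0 ≤ f a) (hb : 0 ≤ f b)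
    (hf''_nonpos : ∀ x ∈ Ioo a b, f x < 0 → f'' x ≤ 0) :
    ∀ x ∈ Icc a b, 0 ≤ f x := by
  by_contra! ⟨c, hc, hfc⟩
  obtain ⟨m, hm, hmin⟩ := isCompact_Icc.exists_isMinOn ⟨c, hc⟩ hf
  have hfm : f m < 0 := (hmin hc).trans_lt hfc
  have hm' : m ∈ Ioo a b :=
    ⟨lt_of_le_of_ne hm.1 (by rintro rfl; linarith), lt_of_le_of_ne hm.2 (by rintro rfl; linarith)⟩
  have hcrit : f' m = 0 :=
    (hmin.isLocalMin (Icc_mem_nhds hm'.1 hm'.2)).hasDerivAt_eq_zero (hf' m hm')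
  obtain ⟨z, hz, hfz, hneg⟩ :=
    (hf.mono (Icc_subset_Icc_left hm.1)).exists_first_zero hm.2 hfm hb
  have hsub : Ioo m z ⊆ Ioo a b := Ioo_subset_Ioo hm'.1.le hz.2
  have hconcave : ConcaveOn ℝ (Icc m z) f := by
    refine concaveOn_of_hasDerivWithinAt2_nonpos (convex_Icc m z)
      (hf.mono (Icc_subset_Icc hm.1 hz.2)) (f' := f') (f'' := f'') ?_ ?_ ?_ <;> rw [interior_Icc]
    · exact fun x hx => (hf' x (hsub hx)).hasDerivWithinAt
    · exact fun x hx => (hf'' x (hsub hx)).hasDerivWithinAt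
    · exact fun x hx => hf''_nonpos x (hsub hx) (hneg x ⟨hx.1.le, hx.2⟩)
  have hslope := hconcave.slope_le_of_hasDerivWithinAt_Ioi (left_mem_Icc.2 hz.1.le)
    (right_mem_Icc.2 hz.1.le) hz.1 (hf' m hm').hasDerivWithinAt
  rw [hcrit, slope_def_field, hfz] at hslope
  have : 0 < (0 - f m) / (z - m) := div_pos (by linarith) (by linarith [hz.1])
  linarith

theorem IsMinOn.hasDerivWithinAt_Icc_right_nonpos {f : ℝ → ℝ} {a b f' : ℝ} (hab : a < b)
    (hmin : IsMinOn f (Icc a b) b) (hf : HasDerivWithinAt f f' (Icc a b) b) : f' ≤ 0 := by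
  have hdir : a - b ∈ posTangentConeAt (Icc a b) b :=
    sub_mem_posTangentConeAt_of_segment_subset (by rw [segment_symm, segment_eq_Icc hab.le])
  have := hmin.localize.hasFDerivWithinAt_nonneg hf hdir
  simp only [ContinuousLinearMap.toSpanSingleton_apply, smul_eq_mul] at this
  nlinarith

theorem stmt_11_general (K h h' h'' : ℝ → ℝ)
    (hKneg : ∀ r ∈ Set.Icc (0 : ℝ) 1, K r ≤ 0)
    (hh : ∀ r ∈ Set.Icc (0 : ℝ) 1, HasDerivWithinAt h (h' r) (Set.Icc 0 1) r)
    (hh' : ∀ r ∈ Set.Icc (0 : ℝ) 1, HasDerivWithinAt h' (h'' r) (Set.Icc 0 1) r)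
    (heq : ∀ r ∈ Set.Icc (0 : ℝ) 1, h'' r + K r * h r = 0)
    (h0 : h 0 = 1) (h1 : h 1 = 0) :
    (∀ r ∈ Set.Icc (0 : ℝ) 1, 0 ≤ h r ∧ h r ≤ 1 - r) ∧
      -1 ≤ h' 1 ∧ h' 1 ≤ 0 := by
  have hcont : ContinuousOn h (Icc 0 1) := fun r hr => (hh r hr).continuousWithinAt
  have hdh : ∀ x ∈ Ioo (0 : ℝ) 1, HasDerivAt h (h' x) x := fun x hx =>
    (hh x (Ioo_subset_Icc_self hx)).hasDerivAt (Icc_mem_nhds hx.1 hx.2)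
  have hdh' : ∀ x ∈ Ioo (0 : ℝ) 1, HasDerivAt h' (h'' x) x := fun x hx =>
    (hh' x (Ioo_subset_Icc_self hx)).hasDerivAt (Icc_mem_nhds hx.1 hx.2)
  have hnonneg : ∀ r ∈ Icc (0 : ℝ) 1, 0 ≤ h r :=
    nonneg_of_hasDerivAt2_nonpos_of_neg hcont hdh hdh' (by simp [h0]) h1.ge fun x hx hneg => by
      nlinarith [heq x (Ioo_subset_Icc_self hx), hKneg x (Ioo_subset_Icc_self hx)]
  have hconv : ConvexOn ℝ (Icc (0 : ℝ) 1) h := by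
    refine convexOn_of_hasDerivWithinAt2_nonneg (convex_Icc 0 1) hcont (f' := h') (f'' := h'') ?_ ?_ ?_ <;>
      rw [interior_Icc]
    · exact fun x hx => (hdh x hx).hasDerivWithinAt
    · exact fun x hx => (hdh' x hx).hasDerivWithinAt
    · exact fun x hx => by
        nlinarith [heq x (Ioo_subset_Icc_self hx), hKneg x (Ioo_subset_Icc_self hx),
          hnonneg x (Ioo_subset_Icc_self hx)]
  have h0_mem : (0 : ℝ) ∈ Icc (0 : ℝ) 1 := left_mem_Icc.2 zero_le_one
  have h1_mem : (1 : ℝ) ∈ Icc (0 : ℝ) 1 := right_mem_Icc.2 zero_le_one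
  refine ⟨fun r hr => ⟨hnonneg r hr, ?_⟩, ?_, ?_⟩
  · have hchord := hconv.2 h0_mem h1_mem (sub_nonneg.2 hr.2) hr.1 (sub_add_cancel 1 r)
    simpa [h0, h1] using hchord
  · have hslope := hconv.slope_le_of_hasDerivWithinAt h0_mem h1_mem one_pos (hh 1 h1_mem)
    simpa [slope_def_field, h0, h1] using hslope
  · exact IsMinOn.hasDerivWithinAt_Icc_right_nonpos one_pos
      (fun x hx => by simpa [h1] using hnonneg x hx) (hh 1 h1_mem)

/-- Scalar core of the mixed-derivative bound for the phase function: for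
`h'' + Kh = 0` on `[0, 1]` with nonpositive `K`, `h(0) = 1`, `h(1) = 0`, one has
`0 ≤ h(r) ≤ 1 - r` and `-1 ≤ h'(1) ≤ 0`. -/
theorem stmt_11 (K h h' h'' : ℝ → ℝ)
    (hK : ContinuousOn K (Set.Icc 0 1))
    (hKneg : ∀ r ∈ Set.Icc (0 : ℝ) 1, K r ≤ 0)
    (hh : ∀ r ∈ Set.Icc (0 : ℝ) 1, HasDerivWithinAt h (h' r) (Set.Icc 0 1) r)
    (hh' : ∀ r ∈ Set.Icc (0 : ℝ) 1, HasDerivWithinAt h' (h'' r) (Set.Icc 0 1) r)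
    (hh'' : ContinuousOn h'' (Set.Icc 0 1))
    (heq : ∀ r ∈ Set.Icc (0 : ℝ) 1, h'' r + K r * h r = 0)
    (h0 : h 0 = 1) (h1 : h 1 = 0) :
    (∀ r ∈ Set.Icc (0 : ℝ) 1, 0 ≤ h r ∧ h r ≤ 1 - r) ∧
      -1 ≤ h' 1 ∧ h' 1 ≤ 0 :=
  stmt_11_general K h h' h'' hKneg hh hh' heq h0 h1
end

section
/- Let K_n, K : (-∞, 0] → ℝ (n ∈ ℕ) be continuous functions with K_n(r) ≤ 0 and K(r) ≤ 0 for all r ≤ 0, and suppose K_n → K uniformly on every compact subset of (-∞, 0]. For each n let h_n be the unique twice continuously differentiable solution of h_n'' + K_n h_n = 0 on (-∞, 0] with h_n(0) = 1 that is bounded on (-∞, 0], and let h be the corresponding bounded solution for K. Then h_n → h uniformly on every compact subset of (-∞, 0], and h_n'(0) → h'(0). -/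
/-!
Write `q = -K ≥ 0`. A bounded solution of `u'' = q u` with `u 0 = 1` satisfies `|u| ≤ 1`:
`ψ = 1 ± u` satisfies `ψ'' ≤ q ψ`, so the maximum principle on `[-T, 0]`, applied to `ψ` plus the
linear barrier `C (-r) / T`, gives `1 ± u r ≥ -C (-r) / T` for every `T`.

Next, `w = hₙ - h` satisfies `w'' = -Kₙ w + (K - Kₙ) h`, and the forcing term is at most
`ε = sup_{[-T, 0]} |Kₙ - K|`. Since `|w (-T)| ≤ 2` and `w 0 = 0`, adding the barrier
`2 (-r) / T + ε (r + T) (-r) / 2` gives `|w r| ≤ 2 (-r) / T + ε T²`. This is small on a fixed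
compact set once `T` is large and then `n` is large.

Finally, `|Kₙ|` is bounded near `0` uniformly in `n`, so `w''` is too, say by `B`. The mean value
theorem then gives `|w' 0| ≤ |w (-t)| / t + B t`. Take `t` small first, then `n` large.
-/

open Filter Topology Set

theorem nonneg_of_deriv2_nonpos_of_neg_s12 {ψ ψ' ψ'' : ℝ → ℝ} {a b : ℝ}
    (hψ : ∀ x ∈ Icc a b, HasDerivWithinAt ψ (ψ' x) (Icc a b) x)
    (hψ' : ∀ x ∈ Icc a b, HasDerivWithinAt ψ' (ψ'' x) (Icc a b) x)
    (hconc : ∀ x ∈ Ioo a b, ψ x < 0 → ψ'' x ≤ 0) (ha : 0 ≤ ψ a) (hb : 0 ≤ ψ b) :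
    ∀ x ∈ Icc a b, 0 ≤ ψ x := by
  intro x hx
  by_contra! hx_neg
  have hcont : ContinuousOn ψ (Icc a b) := fun y hy => (hψ y hy).continuousWithinAt
  obtain ⟨r, hr, hmin⟩ := isCompact_Icc.exists_isMinOn ⟨x, hx⟩ hcont
  have hr_neg : ψ r < 0 := (hmin hx).trans_lt hx_neg
  have hr_mem : r ∈ Ioo a b :=
    ⟨hr.1.lt_of_ne (by rintro rfl; linarith), hr.2.lt_of_ne (by rintro rfl; linarith)⟩
  have hr_nhds : Icc a b ∈ 𝓝 r := Icc_mem_nhds hr_mem.1 hr_mem.2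
  have hr_crit : ψ' r = 0 :=
    (hmin.isLocalMin hr_nhds).hasDerivAt_eq_zero ((hψ r hr).hasDerivAt hr_nhds)
  -- `c` is the first point to the right of the minimum where `ψ` is back to `0`;
  -- `ψ` is concave on `[r, c]` and starts with slope `0`, so it cannot climb back.
  set S := Icc r b ∩ ψ ⁻¹' Ici 0
  have hS_closed : IsClosed S :=
    (hcont.mono (Icc_subset_Icc_left hr.1)).preimage_isClosed_of_isClosed isClosed_Icc isClosed_Ici
  have hS_bdd : BddBelow S := ⟨r, fun y hy => hy.1.1⟩
  set c := sInf S
  have hcS : c ∈ S := hS_closed.csInf_mem ⟨b, ⟨hr.2, le_rfl⟩, hb⟩ hS_bdd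
  have hc_nonneg : 0 ≤ ψ c := hcS.2
  have hrc : r < c := hcS.1.1.lt_of_ne fun h => by rw [← h] at hc_nonneg; linarith
  have hneg_before : ∀ y ∈ Ico r c, ψ y < 0 := by
    intro y hy
    by_contra! h
    exact (csInf_le hS_bdd ⟨⟨hy.1, hy.2.le.trans hcS.1.2⟩, h⟩).not_gt hy.2
  have hsub : Icc r c ⊆ Icc a b := Icc_subset_Icc hr.1 hcS.1.2
  have hinterior : ∀ y ∈ interior (Icc r c), y ∈ Icc a b ∧ y ∈ Ioo a b ∧ ψ y < 0 := by
    intro y hy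
    rw [interior_Icc] at hy
    exact ⟨hsub (Ioo_subset_Icc_self hy), ⟨hr_mem.1.trans hy.1, hy.2.trans_le hcS.1.2⟩,
      hneg_before y ⟨hy.1.le, hy.2⟩⟩
  have hψ'_anti : AntitoneOn ψ' (Icc r c) :=
    antitoneOn_of_hasDerivWithinAt_nonpos (convex_Icc r c)
      (fun y hy => ((hψ' y (hsub hy)).continuousWithinAt).mono hsub)
      (fun y hy => ((hψ' y (hinterior y hy).1).mono (interior_subset.trans hsub)))
      (fun y hy => hconc y (hinterior y hy).2.1 (hinterior y hy).2.2)
  have hψ_anti : AntitoneOn ψ (Icc r c) :=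
    antitoneOn_of_hasDerivWithinAt_nonpos (convex_Icc r c) (hcont.mono hsub)
      (fun y hy => ((hψ y (hinterior y hy).1).mono (interior_subset.trans hsub)))
      (fun y hy => hr_crit ▸ hψ'_anti ⟨le_rfl, hrc.le⟩ (interior_subset hy) (interior_subset hy).1)
  linarith [hψ_anti ⟨le_rfl, hrc.le⟩ ⟨hrc.le, le_rfl⟩ hrc.le]

theorem neg_barrier_le_of_deriv2_le {ψ ψ' ψ'' q : ℝ → ℝ} {a b M ε : ℝ} (hab : a < b)
    (hM : 0 ≤ M) (hε : 0 ≤ ε)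
    (hψ : ∀ x ∈ Icc a b, HasDerivWithinAt ψ (ψ' x) (Icc a b) x)
    (hψ' : ∀ x ∈ Icc a b, HasDerivWithinAt ψ' (ψ'' x) (Icc a b) x)
    (hq : ∀ x ∈ Ioo a b, 0 ≤ q x) (hineq : ∀ x ∈ Ioo a b, ψ'' x ≤ q x * ψ x + ε)
    (ha : -M ≤ ψ a) (hb : 0 ≤ ψ b) :
    ∀ x ∈ Icc a b, -(M * (b - x) / (b - a) + ε * (x - a) * (b - x) / 2) ≤ ψ x := by
  set β : ℝ → ℝ := fun x => M * (b - x) / (b - a) + ε * (x - a) * (b - x) / 2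
  have hβ_nonneg : ∀ x ∈ Icc a b, 0 ≤ β x := fun x hx => by
    have : 0 ≤ (x - a) * (b - x) := mul_nonneg (by linarith [hx.1]) (by linarith [hx.2])
    have : 0 ≤ M * (b - x) / (b - a) :=
      div_nonneg (mul_nonneg hM (by linarith [hx.2])) (by linarith)
    simp only [β]; nlinarith
  have hβ (x : ℝ) : HasDerivAt β (-M / (b - a) + ε * (a + b - 2 * x) / 2) x := by
    have := ((((hasDerivAt_id x).const_sub b).const_mul M).div_const (b - a)).add
      (((((hasDerivAt_id x).sub_const a).const_mul ε).mul
        ((hasDerivAt_id x).const_sub b)).div_const 2)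
    exact this.congr_deriv (by simp only [id]; ring)
  have hβ' (x : ℝ) : HasDerivAt (fun x => -M / (b - a) + ε * (a + b - 2 * x) / 2) (-ε) x := by
    have := ((((hasDerivAt_id x).const_mul 2).const_sub (a + b)).const_mul ε).div_const 2
      |>.const_add (-M / (b - a))
    exact this.congr_deriv (by ring)
  have key := nonneg_of_deriv2_nonpos_of_neg_s12 (ψ := ψ + β)
    (fun x hx => (hψ x hx).add (hβ x).hasDerivWithinAt)
    (fun x hx => (hψ' x hx).add (hβ' x).hasDerivWithinAt)
    (fun x hx hneg => by
      have := mul_nonneg (hq x hx) (hβ_nonneg x (Ioo_subset_Icc_self hx))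
      have := mul_nonpos_of_nonneg_of_nonpos (hq x hx) hneg.le
      simp only [Pi.add_apply] at hneg this ⊢
      nlinarith [hineq x hx])
    (by simp [β, (sub_pos.2 hab).ne']; linarith) (by simpa [β] using hb)
  intro x hx
  have := key x hx
  simp only [Pi.add_apply, β] at this
  linarith

theorem nonneg_of_deriv2_le_of_bddBelow {ψ ψ' ψ'' q : ℝ → ℝ} {C : ℝ}
    (hψ : ∀ x ≤ 0, HasDerivWithinAt ψ (ψ' x) (Iic 0) x)
    (hψ' : ∀ x ≤ 0, HasDerivWithinAt ψ' (ψ'' x) (Iic 0) x)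
    (hq : ∀ x ≤ 0, 0 ≤ q x) (hineq : ∀ x ≤ 0, ψ'' x ≤ q x * ψ x)
    (hC : ∀ x ≤ 0, -C ≤ ψ x) (h0 : 0 ≤ ψ 0) :
    ∀ x ≤ 0, 0 ≤ ψ x := by
  intro x hx
  have hbarrier : ∀ T ≥ max 1 (-x), -(max C 0 * (-x) / T) ≤ ψ x := by
    intro T hT
    have hT0 : 0 < T := lt_of_lt_of_le one_pos (le_of_max_le_left hT)
    have hxT : x ∈ Icc (-T) 0 := ⟨by linarith [le_of_max_le_right hT], hx⟩
    have := neg_barrier_le_of_deriv2_le (ε := 0) (neg_lt_zero.2 hT0) (le_max_right C 0) le_rfl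
      (fun y hy => (hψ y hy.2).mono Icc_subset_Iic_self)
      (fun y hy => (hψ' y hy.2).mono Icc_subset_Iic_self)
      (fun y hy => hq y hy.2.le) (fun y hy => by simpa using hineq y hy.2.le)
      (le_trans (neg_le_neg (le_max_left C 0)) (hC _ (by linarith))) h0 x hxT
    simpa using this
  have hlim : Tendsto (fun T => -(max C 0 * (-x) / T)) atTop (𝓝 0) := by
    simpa using (tendsto_const_nhds.div_atTop (tendsto_id (α := ℝ))).neg
  exact le_of_tendsto hlim (eventually_atTop.2 ⟨_, hbarrier⟩)

theorem abs_deriv_le_of_abs_deriv2_le {f f' f'' : ℝ → ℝ} {a b B : ℝ} (hab : a < b)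
    (hf : ∀ x ∈ Icc a b, HasDerivWithinAt f (f' x) (Icc a b) x)
    (hf' : ∀ x ∈ Icc a b, HasDerivWithinAt f' (f'' x) (Icc a b) x)
    (hB : ∀ x ∈ Icc a b, |f'' x| ≤ B) :
    |f' b| ≤ |f b - f a| / (b - a) + B * (b - a) := by
  obtain ⟨c, hc, hslope⟩ := exists_hasDerivAt_eq_slope f f' hab
    (fun x hx => (hf x hx).continuousWithinAt)
    (fun x hx => (hf x (Ioo_subset_Icc_self hx)).hasDerivAt (Icc_mem_nhds hx.1 hx.2))
  have hc_slope : |f' c| = |f b - f a| / (b - a) := by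
    rw [hslope, abs_div, abs_of_pos (sub_pos.2 hab)]
  have hvar : |f' b - f' c| ≤ B * (b - a) := by
    have := (convex_Icc a b).norm_image_sub_le_of_norm_hasDerivWithin_le hf' hB
      (Ioo_subset_Icc_self hc) (right_mem_Icc.2 hab.le)
    rw [Real.norm_eq_abs, Real.norm_eq_abs, abs_of_pos (sub_pos.2 hc.2)] at this
    nlinarith [(abs_nonneg _).trans (hB a (left_mem_Icc.2 hab.le)), hc.1]
  linarith [abs_sub_abs_le_abs_sub (f' b) (f' c)]

structure IsJacobiSolution (K u u' u'' : ℝ → ℝ) : Prop where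
  hasDerivWithinAt : ∀ r ≤ 0, HasDerivWithinAt u (u' r) (Iic 0) r
  hasDerivWithinAt_deriv : ∀ r ≤ 0, HasDerivWithinAt u' (u'' r) (Iic 0) r
  deriv2_add_mul : ∀ r ≤ 0, u'' r + K r * u r = 0

namespace IsJacobiSolution

theorem abs_le_one {K u u' u'' : ℝ → ℝ} (hu : IsJacobiSolution K u u' u'')
    (hK : ∀ r ≤ 0, K r ≤ 0) (hu0 : u 0 = 1) (hbdd : ∃ C, ∀ r ≤ 0, |u r| ≤ C) :
    ∀ r ≤ 0, |u r| ≤ 1 := by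
  obtain ⟨C, hC⟩ := hbdd
  have hle : ∀ r ≤ 0, 0 ≤ 1 - u r := nonneg_of_deriv2_le_of_bddBelow (q := fun r => -K r) (C := C)
    (fun r hr => (hu.hasDerivWithinAt r hr).const_sub 1)
    (fun r hr => (hu.hasDerivWithinAt_deriv r hr).neg)
    (fun r hr => neg_nonneg.2 (hK r hr))
    (fun r hr => by nlinarith [hu.deriv2_add_mul r hr, hK r hr])
    (fun r hr => by linarith [(abs_le.1 (hC r hr)).2, abs_nonneg (u r)]) (by simp [hu0])
  have hge : ∀ r ≤ 0, 0 ≤ 1 + u r := nonneg_of_deriv2_le_of_bddBelow (q := fun r => -K r) (C := C)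
    (fun r hr => (hu.hasDerivWithinAt r hr).const_add 1)
    (hu.hasDerivWithinAt_deriv)
    (fun r hr => neg_nonneg.2 (hK r hr))
    (fun r hr => by nlinarith [hu.deriv2_add_mul r hr, hK r hr])
    (fun r hr => by linarith [(abs_le.1 (hC r hr)).1, abs_nonneg (u r)]) (by simp [hu0])
  exact fun r hr => abs_le.2 ⟨by linarith [hge r hr], by linarith [hle r hr]⟩

theorem abs_sub_le {K₁ K₂ u₁ u₁' u₁'' u₂ u₂' u₂'' : ℝ → ℝ}
    (hu₁ : IsJacobiSolution K₁ u₁ u₁' u₁'') (hu₂ : IsJacobiSolution K₂ u₂ u₂' u₂'')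
    (hK₁ : ∀ r ≤ 0, K₁ r ≤ 0) (hb₁ : ∀ r ≤ 0, |u₁ r| ≤ 1) (hb₂ : ∀ r ≤ 0, |u₂ r| ≤ 1)
    (h0 : u₁ 0 = u₂ 0) {T ε : ℝ} (hT : 0 < T) (hε : 0 ≤ ε)
    (hK : ∀ r ∈ Icc (-T) 0, |K₁ r - K₂ r| ≤ ε) :
    ∀ r ∈ Icc (-T) 0, |u₁ r - u₂ r| ≤ 2 * (-r) / T + ε * T ^ 2 := by
  intro r hr
  have hside : ∀ σ : ℝ, |σ| ≤ 1 → -(2 * (-r) / T + ε * T ^ 2) ≤ σ * (u₁ r - u₂ r) := by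
    intro σ hσ
    have hsub : Icc (-T) 0 ⊆ Iic 0 := Icc_subset_Iic_self
    have hdiff : ∀ x ≤ 0, |σ * (u₁ x - u₂ x)| ≤ 2 := fun x hx => by
      calc |σ * (u₁ x - u₂ x)| ≤ 1 * (1 + 1) := by
            rw [abs_mul]
            gcongr
            exact (abs_sub _ _).trans (add_le_add (hb₁ x hx) (hb₂ x hx))
        _ = 2 := by norm_num
    have := neg_barrier_le_of_deriv2_le (ψ := fun x => σ * (u₁ x - u₂ x)) (q := fun x => -K₁ x)
      (neg_lt_zero.2 hT) zero_le_two hε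
      (fun x hx => (((hu₁.hasDerivWithinAt x hx.2).sub
        (hu₂.hasDerivWithinAt x hx.2)).const_mul σ).mono hsub)
      (fun x hx => (((hu₁.hasDerivWithinAt_deriv x hx.2).sub
        (hu₂.hasDerivWithinAt_deriv x hx.2)).const_mul σ).mono hsub)
      (fun x hx => neg_nonneg.2 (hK₁ x hx.2.le))
      (fun x hx => by
        have hpert : |σ * ((K₂ x - K₁ x) * u₂ x)| ≤ ε := by
          calc |σ * ((K₂ x - K₁ x) * u₂ x)| = |σ| * (|K₁ x - K₂ x| * |u₂ x|) := by
                rw [abs_mul, abs_mul, abs_sub_comm]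
            _ ≤ 1 * (ε * 1) := by
                gcongr
                exacts [hK x (Ioo_subset_Icc_self hx), hb₂ x hx.2.le]
            _ = ε := by ring
        have e₁ : u₁'' x = -K₁ x * u₁ x := by linarith [hu₁.deriv2_add_mul x hx.2.le]
        have e₂ : u₂'' x = -K₂ x * u₂ x := by linarith [hu₂.deriv2_add_mul x hx.2.le]
        have : σ * (u₁'' x - u₂'' x)
            = -K₁ x * (σ * (u₁ x - u₂ x)) + σ * ((K₂ x - K₁ x) * u₂ x) := by
          rw [e₁, e₂]; ring
        linarith [le_abs_self (σ * ((K₂ x - K₁ x) * u₂ x))])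
      (by linarith [abs_le.1 (hdiff (-T) (by linarith))]) (by simp [h0]) r hr
    have hbar :
        2 * (0 - r) / (0 - -T) + ε * (r - -T) * (0 - r) / 2 ≤ 2 * (-r) / T + ε * T ^ 2 := by
      have hr₁ : 0 ≤ r - -T := by linarith [hr.1]
      have hr₂ : 0 ≤ 0 - r := by linarith [hr.2]
      have hprod : (r - -T) * (0 - r) ≤ T ^ 2 := by nlinarith
      rw [zero_sub (-T), neg_neg, zero_sub r]
      nlinarith [mul_le_mul_of_nonneg_left hprod hε, mul_nonneg hε (mul_nonneg hr₁ hr₂)]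
    linarith
  have h₁ := hside 1 (by simp)
  have h₂ := hside (-1) (by simp)
  exact abs_le.2 ⟨by linarith, by linarith⟩

variable {Kseq : ℕ → ℝ → ℝ} {K : ℝ → ℝ} {u u' u'' : ℕ → ℝ → ℝ} {v v' v'' : ℝ → ℝ}

theorem tendstoUniformlyOn_Icc (hu : ∀ n, IsJacobiSolution (Kseq n) (u n) (u' n) (u'' n))
    (hv : IsJacobiSolution K v v' v'') (hKseq : ∀ n, ∀ r ≤ 0, Kseq n r ≤ 0)
    (hbu : ∀ n, ∀ r ≤ 0, |u n r| ≤ 1) (hbv : ∀ r ≤ 0, |v r| ≤ 1) (h0 : ∀ n, u n 0 = v 0)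
    (hKconv : ∀ T, TendstoUniformlyOn Kseq K atTop (Icc (-T) 0)) (A : ℝ) :
    TendstoUniformlyOn u v atTop (Icc (-A) 0) := by
  rw [Metric.tendstoUniformlyOn_iff]
  intro δ hδ
  set A' := max A 1
  have hA' : 0 < A' := lt_of_lt_of_le one_pos (le_max_right A 1)
  set T := A' + 4 * A' / δ
  have hT : 0 < T := by positivity
  set ε := δ / (4 * T ^ 2)
  have hε : 0 < ε := by positivity
  filter_upwards [Metric.tendstoUniformlyOn_iff.1 (hKconv T) ε hε] with n hn x hx
  have hxT : x ∈ Icc (-T) 0 :=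
    ⟨by linarith [le_max_left A 1, hx.1, div_pos (mul_pos four_pos hA') hδ], hx.2⟩
  have hbound := (hu n).abs_sub_le hv (hKseq n) (hbu n) hbv (h0 n) hT hε.le
    (fun r hr => by simpa [Real.dist_eq, abs_sub_comm] using (hn r hr).le) x hxT
  have h₁ : 2 * (-x) / T ≤ δ / 2 := by
    rw [div_le_iff₀ hT]
    have : 4 * A' = δ * (4 * A' / δ) := by field_simp
    nlinarith [le_max_left A 1, hx.1]
  have h₂ : ε * T ^ 2 = δ / 4 := by simp only [ε]; field_simp
  rw [dist_comm, Real.dist_eq]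
  linarith

theorem tendsto_deriv_zero (hu : ∀ n, IsJacobiSolution (Kseq n) (u n) (u' n) (u'' n))
    (hv : IsJacobiSolution K v v' v'')
    (hbu : ∀ n, ∀ r ≤ 0, |u n r| ≤ 1) (hbv : ∀ r ≤ 0, |v r| ≤ 1) (h0 : ∀ n, u n 0 = v 0)
    (hK : ContinuousOn K (Icc (-1) 0)) (hKconv : TendstoUniformlyOn Kseq K atTop (Icc (-1) 0))
    (hconv : ∀ r ≤ 0, Tendsto (fun n => u n r) atTop (𝓝 (v r))) :
    Tendsto (fun n => u' n 0) atTop (𝓝 (v' 0)) := by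
  obtain ⟨Q, hQ⟩ := isCompact_Icc.exists_bound_of_continuousOn hK
  set B := 2 * Q + 1
  have hB : 0 < B := by
    have := (norm_nonneg _).trans (hQ 0 (right_mem_Icc.2 (by norm_num)))
    positivity
  have hdiff2 : ∀ᶠ n in atTop, ∀ x ∈ Icc (-1) 0, |u'' n x - v'' x| ≤ B := by
    filter_upwards [Metric.tendstoUniformlyOn_iff.1 hKconv 1 one_pos] with n hn x hx
    have hKx : |K x| ≤ Q := hQ x hx
    have hKnx : |Kseq n x| ≤ Q + 1 := by
      have := (hn x hx).le
      rw [Real.dist_eq] at this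
      linarith [abs_sub_abs_le_abs_sub (Kseq n x) (K x), abs_sub_comm (K x) (Kseq n x)]
    have e : u'' n x - v'' x = -(Kseq n x * u n x) + K x * v x := by
      linarith [(hu n).deriv2_add_mul x hx.2, hv.deriv2_add_mul x hx.2]
    rw [e]
    calc |-(Kseq n x * u n x) + K x * v x| ≤ |Kseq n x| * |u n x| + |K x| * |v x| := by
          simpa [abs_mul] using abs_add_le (-(Kseq n x * u n x)) (K x * v x)
      _ ≤ (Q + 1) * 1 + Q * 1 := by
          gcongr
          exacts [(abs_nonneg _).trans hKnx, hbu n x hx.2, (abs_nonneg _).trans hKx, hbv x hx.2]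
      _ = B := by ring
  have hderiv : ∀ t ∈ Ioc (0 : ℝ) 1, ∀ᶠ n in atTop,
      |u' n 0 - v' 0| ≤ |u n (-t) - v (-t)| / t + B * t := by
    intro t ht
    filter_upwards [hdiff2] with n hn
    have hsub : Icc (-t) 0 ⊆ Iic 0 := Icc_subset_Iic_self
    have := abs_deriv_le_of_abs_deriv2_le (f := fun x => u n x - v x) (neg_lt_zero.2 ht.1)
      (fun x hx => (((hu n).hasDerivWithinAt x hx.2).sub (hv.hasDerivWithinAt x hx.2)).mono hsub)
      (fun x hx => (((hu n).hasDerivWithinAt_deriv x hx.2).sub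
        (hv.hasDerivWithinAt_deriv x hx.2)).mono hsub)
      (fun x hx => hn x ⟨by linarith [hx.1, ht.2], hx.2⟩)
    simpa [h0 n, abs_sub_comm] using this
  rw [Metric.tendsto_nhds]
  intro ρ hρ
  set t := min 1 (ρ / (2 * B))
  have ht : t ∈ Ioc (0 : ℝ) 1 := ⟨by positivity, min_le_left _ _⟩
  have hBt : B * t ≤ ρ / 2 := by
    have := min_le_right 1 (ρ / (2 * B))
    rw [le_div_iff₀ (by positivity)] at this
    linarith
  filter_upwards [hderiv t ht,
    Metric.tendsto_nhds.1 (hconv (-t) (by linarith [ht.1])) (t * ρ / 2) (by positivity)]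
    with n hn hconv_t
  rw [Real.dist_eq] at hconv_t ⊢
  have : |u n (-t) - v (-t)| / t < ρ / 2 := by
    rw [div_lt_iff₀ ht.1]; linarith
  linarith

end IsJacobiSolution

theorem stmt_12_general (Kseq : ℕ → ℝ → ℝ) (K : ℝ → ℝ)
    (hKseqneg : ∀ n : ℕ, ∀ r : ℝ, r ≤ 0 → Kseq n r ≤ 0)
    (hK : ContinuousOn K (Set.Iic 0))
    (hKneg : ∀ r : ℝ, r ≤ 0 → K r ≤ 0)
    (hKconv : ∀ s : Set ℝ, s ⊆ Set.Iic 0 → IsCompact s →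
      TendstoUniformlyOn (fun n => Kseq n) K atTop s)
    (hseq hseq' hseq'' : ℕ → ℝ → ℝ) (h h' h'' : ℝ → ℝ)
    (hhn : ∀ n : ℕ, ∀ r : ℝ, r ≤ 0 → HasDerivWithinAt (hseq n) (hseq' n r) (Set.Iic 0) r)
    (hhn' : ∀ n : ℕ, ∀ r : ℝ, r ≤ 0 → HasDerivWithinAt (hseq' n) (hseq'' n r) (Set.Iic 0) r)
    (heqn : ∀ n : ℕ, ∀ r : ℝ, r ≤ 0 → hseq'' n r + Kseq n r * hseq n r = 0)
    (hn0 : ∀ n : ℕ, hseq n 0 = 1)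
    (hnbdd : ∀ n : ℕ, ∃ C : ℝ, ∀ r : ℝ, r ≤ 0 → |hseq n r| ≤ C)
    (hh : ∀ r : ℝ, r ≤ 0 → HasDerivWithinAt h (h' r) (Set.Iic 0) r)
    (hh' : ∀ r : ℝ, r ≤ 0 → HasDerivWithinAt h' (h'' r) (Set.Iic 0) r)
    (heq : ∀ r : ℝ, r ≤ 0 → h'' r + K r * h r = 0)
    (h0 : h 0 = 1)
    (hbdd : ∃ C : ℝ, ∀ r : ℝ, r ≤ 0 → |h r| ≤ C) :
    (∀ s : Set ℝ, s ⊆ Set.Iic 0 → IsCompact s →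
      TendstoUniformlyOn (fun n => hseq n) h atTop s) ∧
    Tendsto (fun n => hseq' n 0) atTop (𝓝 (h' 0)) := by
  have hsol : ∀ n, IsJacobiSolution (Kseq n) (hseq n) (hseq' n) (hseq'' n) :=
    fun n => ⟨hhn n, hhn' n, heqn n⟩
  have hsol_lim : IsJacobiSolution K h h' h'' := ⟨hh, hh', heq⟩
  have hb : ∀ n, ∀ r ≤ 0, |hseq n r| ≤ 1 :=
    fun n => (hsol n).abs_le_one (hKseqneg n) (hn0 n) (hnbdd n)
  have hb_lim := hsol_lim.abs_le_one hKneg h0 hbdd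
  have hval0 : ∀ n, hseq n 0 = h 0 := fun n => (hn0 n).trans h0.symm
  have hconv_Icc := IsJacobiSolution.tendstoUniformlyOn_Icc hsol hsol_lim hKseqneg hb hb_lim hval0
    fun T => hKconv _ Icc_subset_Iic_self isCompact_Icc
  have hconv : ∀ s ⊆ Iic 0, IsCompact s → TendstoUniformlyOn hseq h atTop s := by
    intro s hs hsc
    obtain ⟨a, ha⟩ := hsc.bddBelow
    exact (hconv_Icc (-a)).mono fun x hx => ⟨by rw [neg_neg]; exact ha hx, hs hx⟩
  refine ⟨hconv, IsJacobiSolution.tendsto_deriv_zero hsol hsol_lim hb hb_lim hval0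
    (hK.mono Icc_subset_Iic_self) (hKconv _ Icc_subset_Iic_self isCompact_Icc) ?_⟩
  exact fun r hr => (hconv {r} (singleton_subset_iff.2 hr) isCompact_singleton).tendsto_at rfl

/-- Stability of the bounded Jacobi solution under locally uniform perturbation of the
nonpositive potential: if `Kₙ → K` uniformly on compact subsets of `(-∞, 0]`, then the
bounded solutions `hₙ` of `hₙ'' + Kₙ hₙ = 0`, `hₙ(0) = 1` converge locally uniformly to
the bounded solution `h` for `K`, and `hₙ'(0) → h'(0)`. -/
theorem stmt_12 (Kseq : ℕ → ℝ → ℝ) (K : ℝ → ℝ)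
    (hKseq : ∀ n : ℕ, ContinuousOn (Kseq n) (Set.Iic 0))
    (hKseqneg : ∀ n : ℕ, ∀ r : ℝ, r ≤ 0 → Kseq n r ≤ 0)
    (hK : ContinuousOn K (Set.Iic 0))
    (hKneg : ∀ r : ℝ, r ≤ 0 → K r ≤ 0)
    (hKconv : ∀ s : Set ℝ, s ⊆ Set.Iic 0 → IsCompact s →
      TendstoUniformlyOn (fun n => Kseq n) K atTop s)
    (hseq hseq' hseq'' : ℕ → ℝ → ℝ) (h h' h'' : ℝ → ℝ)
    (hhn : ∀ n : ℕ, ∀ r : ℝ, r ≤ 0 → HasDerivWithinAt (hseq n) (hseq' n r) (Set.Iic 0) r)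
    (hhn' : ∀ n : ℕ, ∀ r : ℝ, r ≤ 0 → HasDerivWithinAt (hseq' n) (hseq'' n r) (Set.Iic 0) r)
    (hhn'' : ∀ n : ℕ, ContinuousOn (hseq'' n) (Set.Iic 0))
    (heqn : ∀ n : ℕ, ∀ r : ℝ, r ≤ 0 → hseq'' n r + Kseq n r * hseq n r = 0)
    (hn0 : ∀ n : ℕ, hseq n 0 = 1)
    (hnbdd : ∀ n : ℕ, ∃ C : ℝ, ∀ r : ℝ, r ≤ 0 → |hseq n r| ≤ C)
    (hh : ∀ r : ℝ, r ≤ 0 → HasDerivWithinAt h (h' r) (Set.Iic 0) r)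
    (hh' : ∀ r : ℝ, r ≤ 0 → HasDerivWithinAt h' (h'' r) (Set.Iic 0) r)
    (hh'' : ContinuousOn h'' (Set.Iic 0))
    (heq : ∀ r : ℝ, r ≤ 0 → h'' r + K r * h r = 0)
    (h0 : h 0 = 1)
    (hbdd : ∃ C : ℝ, ∀ r : ℝ, r ≤ 0 → |h r| ≤ C) :
    (∀ s : Set ℝ, s ⊆ Set.Iic 0 → IsCompact s →
      TendstoUniformlyOn (fun n => hseq n) h atTop s) ∧
    Tendsto (fun n => hseq' n 0) atTop (𝓝 (h' 0)) :=
  stmt_12_general Kseq K hKseqneg hK hKneg hKconv hseq hseq' hseq'' h h' h'' hhn hhn' heqn hn0 hnbdd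
    hh hh' heq h0 hbdd
end

section
/- Let b̃ : ℝ² → ℂ be smooth and compactly supported, and let C₀, C₁ > 0. Then there is a constant C (depending only on b̃, C₀, C₁) with the following property: for every real λ ≥ 1 and every function a : (0, ∞) → ℂ that is measurable on (0, 1/λ], continuously differentiable on [1/λ, ∞), and satisfies |a(r)| ≤ C₀ λ^{1/2} for 0 < r ≤ 1/λ, |a(r)| ≤ C₀ r^{-1/2} for r ≥ 1/λ, and |a'(r)| ≤ C₁ r^{-3/2} for r ≥ 1/λ, one has |λ^{1/2} ∬_{ℝ²} b̃(s, r) a(|r|) e^{iλ|r|} ds dr| ≤ C. -/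
open Real MeasureTheory Set

/-! Split the `r`-integral at `|r| = 1/λ`. Near the diagonal the amplitude is `O(λ^{1/2})` on an
interval of length `1/λ`, which gives `O(λ^{-1/2})`. Away from it, one integration by parts against
`e^{iλr}` gains a factor `1/λ`, while `|a| ≤ C₀ r^{-1/2}` and `|a'| ≤ C₁ r^{-3/2}` integrate over
`[1/λ, T]` to `O(1)` and `O(λ^{1/2})`: again `O(λ^{-1/2})`. The `s`-integral runs over a bounded
interval, so the prefactor `λ^{1/2}` cancels. -/

lemma integral_rpow_neg_half_le {c T : ℝ} (hc : 0 ≤ c) :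
    ∫ x in c..T, x ^ (-(1 : ℝ) / 2) ≤ 2 * T ^ ((1 : ℝ) / 2) := by
  rw [integral_rpow (Or.inl (by norm_num))]
  have hc' : 0 ≤ c ^ ((1 : ℝ) / 2) := rpow_nonneg hc _
  norm_num
  linarith

lemma integral_rpow_neg_three_halves_le {c T : ℝ} (hc : 0 < c) (hcT : c ≤ T) :
    ∫ x in c..T, x ^ (-(3 : ℝ) / 2) ≤ 2 * c ^ (-(1 : ℝ) / 2) := by
  have h0 : (0 : ℝ) ∉ uIcc c T := by
    rw [uIcc_of_le hcT]; exact fun h => hc.not_ge h.1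
  rw [integral_rpow (Or.inr ⟨by norm_num, h0⟩)]
  have hT' : 0 ≤ T ^ (-(1 : ℝ) / 2) := rpow_nonneg (hc.le.trans hcT) _
  norm_num
  linarith

lemma one_div_rpow_neg_half {lam : ℝ} (hlam : 0 ≤ lam) :
    (1 / lam) ^ (-(1 : ℝ) / 2) = lam ^ ((1 : ℝ) / 2) := by
  rw [one_div, inv_rpow hlam, ← rpow_neg hlam]
  norm_num

lemma rpow_half_div_self {lam : ℝ} (hlam : 0 < lam) :
    lam ^ ((1 : ℝ) / 2) / lam = lam ^ (-(1 : ℝ) / 2) := by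
  rw [div_eq_iff hlam.ne', ← rpow_add_one hlam.ne']
  norm_num

lemma one_div_le_rpow_neg_half {lam : ℝ} (hlam : 1 ≤ lam) : 1 / lam ≤ lam ^ (-(1 : ℝ) / 2) := by
  rw [one_div, ← rpow_neg_one]
  exact rpow_le_rpow_of_exponent_le hlam (by norm_num)

lemma norm_exp_I_mul_ofReal_mul (x y : ℝ) : ‖Complex.exp (Complex.I * x * y)‖ = 1 := by
  rw [mul_assoc, ← Complex.ofReal_mul, Complex.norm_exp_I_mul_ofReal]

lemma norm_integral_mul_exp_I_mul_le {u u' : ℝ → ℂ} {c T lam : ℝ} (hcT : c ≤ T) (hlam : lam ≠ 0)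
    (hu : ContinuousOn u (Icc c T)) (huu' : ∀ x ∈ Ioo c T, HasDerivAt u (u' x) x)
    (hu' : IntervalIntegrable u' volume c T) :
    ‖∫ x in c..T, u x * Complex.exp (Complex.I * lam * x)‖ ≤
      (‖u c‖ + ‖u T‖ + ∫ x in c..T, ‖u' x‖) / |lam| := by
  have hIlam : Complex.I * lam ≠ 0 := by simp [hlam]
  set v : ℝ → ℂ := fun x => Complex.exp (Complex.I * lam * x) / (Complex.I * lam)
  have hv : ∀ x : ℝ, HasDerivAt v (Complex.exp (Complex.I * lam * x)) x := by
    intro x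
    have := ((((hasDerivAt_id (x : ℂ)).const_mul (Complex.I * lam)).cexp).div_const
      (Complex.I * lam)).comp_ofReal
    simpa [hIlam] using this
  have hnorm_v : ∀ x, ‖v x‖ = 1 / |lam| := fun x => by simp [v, Complex.norm_exp]
  have hcont_v : Continuous v := continuous_iff_continuousAt.2 fun x => (hv x).continuousAt
  rw [intervalIntegral.integral_mul_deriv_eq_deriv_mul_of_hasDerivAt (u' := u') (v := v)
    (by rwa [uIcc_of_le hcT]) hcont_v.continuousOn (by simpa [hcT] using huu')
    (fun x _ => hv x) hu' ((by fun_prop : Continuous _).intervalIntegrable _ _)]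
  have hIBP : ‖∫ x in c..T, u' x * v x‖ ≤ (∫ x in c..T, ‖u' x‖) / |lam| := by
    refine (intervalIntegral.norm_integral_le_integral_norm hcT).trans_eq ?_
    simp only [norm_mul, hnorm_v, intervalIntegral.integral_mul_const]
    ring
  calc _ ≤ ‖u T * v T‖ + ‖u c * v c‖ + ‖∫ x in c..T, u' x * v x‖ :=
      (norm_sub_le _ _).trans (add_le_add_left (norm_sub_le _ _) _)
    _ ≤ ‖u T‖ / |lam| + ‖u c‖ / |lam| + (∫ x in c..T, ‖u' x‖) / |lam| := by
      simp only [norm_mul, hnorm_v, mul_one_div]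
      gcongr
    _ = _ := by ring

lemma AEMeasurable.comp_abs {β : Type*} [MeasurableSpace β] {f : ℝ → β}
    (hf : AEMeasurable f (volume.restrict (Ioi 0))) : AEMeasurable (fun x => f |x|) := by
  have hneg : AEMeasurable (fun x => f |x|) (volume.restrict (Iio 0)) := by
    have hmp := (Measure.measurePreserving_neg (volume : Measure ℝ)).restrict_preimage
      (measurableSet_Ioi (a := (0 : ℝ)))
    rw [neg_preimage, neg_Ioi, neg_zero] at hmp
    refine (hf.comp_quasiMeasurePreserving hmp.quasiMeasurePreserving).congr ?_
    filter_upwards [ae_restrict_mem measurableSet_Iio] with x hx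
    simp [abs_of_neg (show x < 0 from hx)]
  have hpos : AEMeasurable (fun x => f |x|) (volume.restrict (Ioi 0)) := by
    refine hf.congr ?_
    filter_upwards [ae_restrict_mem measurableSet_Ioi] with x hx
    simp [abs_of_pos (show 0 < x from hx)]
  rw [← restrict_compl_singleton (μ := volume) (0 : ℝ), ← Iio_union_Ioi]
  exact aemeasurable_union_iff.2 ⟨hneg, hpos⟩

lemma integral_eq_integral_Ioi_add_comp_neg {E : Type*} [NormedAddCommGroup E] [NormedSpace ℝ E]
    {φ : ℝ → E} (hφ : Integrable φ) : ∫ x, φ x = ∫ x in Ioi 0, (φ x + φ (-x)) := by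
  rw [integral_add hφ.integrableOn hφ.comp_neg.integrableOn, integral_comp_neg_Ioi, neg_zero,
    add_comm, intervalIntegral.integral_Iic_add_Ioi hφ.integrableOn hφ.integrableOn]

lemma norm_deriv_comp_prodMk_le {E F : Type*} [NormedAddCommGroup E] [NormedSpace ℝ E]
    [NormedAddCommGroup F] [NormedSpace ℝ F] {f : E × ℝ → F} (hf : Differentiable ℝ f)
    (s : E) (r : ℝ) : ‖deriv (fun r => f (s, r)) r‖ ≤ ‖fderiv ℝ f (s, r)‖ := by
  have hslice : HasDerivAt (fun r => f (s, r)) (fderiv ℝ f (s, r) (0, 1)) r :=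
    (hf (s, r)).hasFDerivAt.comp_hasDerivAt r ((hasDerivAt_const r s).prodMk (hasDerivAt_id r))
  rw [hslice.deriv]
  simpa using (fderiv ℝ f (s, r)).le_opNorm (0, 1)

/-- The hypotheses on the amplitudes `a_±(λ; ·)` of the local part of the kernel. -/
structure IsAdmissibleAmplitude (C₀ C₁ lam : ℝ) (a : ℝ → ℂ) : Prop where
  aemeasurable : AEMeasurable a (volume.restrict (Ioc 0 (1 / lam)))
  contDiffOn : ContDiffOn ℝ 1 a (Ici (1 / lam))
  norm_le_near : ∀ r, 0 < r → r ≤ 1 / lam → ‖a r‖ ≤ C₀ * lam ^ ((1 : ℝ) / 2)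
  norm_le_far : ∀ r, 1 / lam ≤ r → ‖a r‖ ≤ C₀ * r ^ (-(1 : ℝ) / 2)
  norm_derivWithin_le :
    ∀ r, 1 / lam ≤ r → ‖derivWithin a (Ici (1 / lam)) r‖ ≤ C₁ * r ^ (-(3 : ℝ) / 2)

namespace IsAdmissibleAmplitude

variable {C₀ C₁ lam : ℝ} {a : ℝ → ℂ}

lemma C₀_nonneg (ha : IsAdmissibleAmplitude C₀ C₁ lam a) (hlam : 0 < lam) : 0 ≤ C₀ :=
  nonneg_of_mul_nonneg_left ((norm_nonneg _).trans (ha.norm_le_far _ le_rfl))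
    (rpow_pos_of_pos (by positivity) _)

lemma C₁_nonneg (ha : IsAdmissibleAmplitude C₀ C₁ lam a) (hlam : 0 < lam) : 0 ≤ C₁ :=
  nonneg_of_mul_nonneg_left ((norm_nonneg _).trans (ha.norm_derivWithin_le _ le_rfl))
    (rpow_pos_of_pos (by positivity) _)

lemma norm_le (ha : IsAdmissibleAmplitude C₀ C₁ lam a) (hlam : 0 < lam) {r : ℝ} (hr : 0 < r) :
    ‖a r‖ ≤ C₀ * lam ^ ((1 : ℝ) / 2) := by
  rcases le_total r (1 / lam) with hle | hge
  · exact ha.norm_le_near r hr hle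
  · refine (ha.norm_le_far r hge).trans ?_
    rw [← one_div_rpow_neg_half hlam.le]
    exact mul_le_mul_of_nonneg_left (rpow_le_rpow_of_nonpos (by positivity) hge (by norm_num))
      (ha.C₀_nonneg hlam)

lemma aemeasurable_Ioi (ha : IsAdmissibleAmplitude C₀ C₁ lam a) (hlam : 0 < lam) :
    AEMeasurable a (volume.restrict (Ioi 0)) := by
  rw [← Ioc_union_Ioi_eq_Ioi (by positivity : (0 : ℝ) ≤ 1 / lam), aemeasurable_union_iff]
  exact ⟨ha.aemeasurable,
    (ha.contDiffOn.continuousOn.mono Ioi_subset_Ici_self).aemeasurable measurableSet_Ioi⟩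

lemma hasDerivAt (ha : IsAdmissibleAmplitude C₀ C₁ lam a) {x : ℝ} (hx : 1 / lam < x) :
    HasDerivAt a (derivWithin a (Ici (1 / lam)) x) x :=
  ((ha.contDiffOn.differentiableOn one_ne_zero x hx.le).hasDerivWithinAt).hasDerivAt
    (Ici_mem_nhds hx)

lemma integrable_mul_comp_abs (ha : IsAdmissibleAmplitude C₀ C₁ lam a) (hlam : 0 < lam)
    {X : Type*} [MeasurableSpace X] {μ : Measure X} {φ : X → ℝ}
    (hφ : Measure.QuasiMeasurePreserving φ μ volume) {b : X → ℂ} (hb : Integrable b μ) :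
    Integrable (fun x => b x * a |φ x| * Complex.exp (Complex.I * lam * (|φ x| : ℝ))) μ := by
  refine (hb.norm.const_mul (C₀ * lam ^ ((1 : ℝ) / 2))).mono' ?_ ?_
  · refine (hb.aestronglyMeasurable.mul ?_).mul ?_
    · exact ((ha.aemeasurable_Ioi hlam).comp_abs.comp_quasiMeasurePreserving
        hφ).aestronglyMeasurable
    · exact (by fun_prop : Continuous fun r : ℝ => Complex.exp (Complex.I * lam * (|r| : ℝ))
        ).comp_aestronglyMeasurable hφ.aemeasurable.aestronglyMeasurable
  · filter_upwards [hφ.ae (volume.ae_ne 0)] with x hx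
    rw [norm_mul, norm_mul, norm_exp_I_mul_ofReal_mul, mul_one, mul_comm]
    exact mul_le_mul_of_nonneg_right (ha.norm_le hlam (abs_pos.2 hx)) (norm_nonneg _)

variable {g : ℝ → ℂ} {M₀ M₁ T : ℝ}

lemma norm_mul_mul_exp_le (ha : IsAdmissibleAmplitude C₀ C₁ lam a) (hlam : 0 < lam)
    (hg₀ : ∀ r, ‖g r‖ ≤ M₀) {r : ℝ} (hr : 0 < r) :
    ‖g r * a r * Complex.exp (Complex.I * lam * r)‖ ≤ M₀ * (C₀ * lam ^ ((1 : ℝ) / 2)) := by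
  rw [norm_mul, norm_mul, norm_exp_I_mul_ofReal_mul, mul_one]
  exact mul_le_mul (hg₀ r) (ha.norm_le hlam hr) (norm_nonneg _) ((norm_nonneg _).trans (hg₀ r))

lemma norm_integral_near_le (ha : IsAdmissibleAmplitude C₀ C₁ lam a) (hlam : 0 < lam)
    (hg₀ : ∀ r, ‖g r‖ ≤ M₀) :
    ‖∫ r in 0..1 / lam, g r * a r * Complex.exp (Complex.I * lam * r)‖ ≤
      M₀ * C₀ * lam ^ (-(1 : ℝ) / 2) := by
  refine (intervalIntegral.norm_integral_le_of_norm_le_const fun r hr =>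
    ha.norm_mul_mul_exp_le hlam hg₀ (by simpa [hlam.le] using hr.1)).trans_eq ?_
  rw [sub_zero, abs_of_pos (by positivity), ← rpow_half_div_self hlam]
  ring

lemma continuousOn_deriv_mul (ha : IsAdmissibleAmplitude C₀ C₁ lam a) (hg : ContDiff ℝ 1 g) :
    ContinuousOn (fun x => deriv g x * a x + g x * derivWithin a (Ici (1 / lam)) x)
      (Ici (1 / lam)) :=
  ((hg.continuous_deriv le_rfl).continuousOn.mul ha.contDiffOn.continuousOn).add
    (hg.continuous.continuousOn.mul
      (ha.contDiffOn.continuousOn_derivWithin (uniqueDiffOn_Ici _) le_rfl))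

lemma integral_norm_deriv_mul_le (ha : IsAdmissibleAmplitude C₀ C₁ lam a) (hlam : 0 < lam)
    (hg : ContDiff ℝ 1 g) (hg₀ : ∀ r, ‖g r‖ ≤ M₀) (hg₁ : ∀ r, ‖deriv g r‖ ≤ M₁)
    (hT : 1 / lam ≤ T) :
    ∫ x in 1 / lam..T, ‖deriv g x * a x + g x * derivWithin a (Ici (1 / lam)) x‖ ≤
      M₁ * C₀ * (2 * T ^ ((1 : ℝ) / 2)) + M₀ * C₁ * (2 * lam ^ ((1 : ℝ) / 2)) := by
  have hc : 0 < 1 / lam := by positivity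
  have hM₀ : 0 ≤ M₀ := (norm_nonneg _).trans (hg₀ 0)
  have hM₁ : 0 ≤ M₁ := (norm_nonneg _).trans (hg₁ 0)
  have hC₀ := ha.C₀_nonneg hlam
  have hC₁ := ha.C₁_nonneg hlam
  have h0 : (0 : ℝ) ∉ uIcc (1 / lam) T := by
    rw [uIcc_of_le hT]; exact fun h => hc.not_ge h.1
  have hi₁ : IntervalIntegrable (fun x : ℝ => x ^ (-(1 : ℝ) / 2)) volume (1 / lam) T :=
    intervalIntegral.intervalIntegrable_rpow (Or.inr h0)
  have hi₃ : IntervalIntegrable (fun x : ℝ => x ^ (-(3 : ℝ) / 2)) volume (1 / lam) T :=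
    intervalIntegral.intervalIntegrable_rpow (Or.inr h0)
  calc _ ≤ ∫ x in 1 / lam..T, (M₁ * C₀ * x ^ (-(1 : ℝ) / 2) + M₀ * C₁ * x ^ (-(3 : ℝ) / 2)) := by
        refine intervalIntegral.integral_mono_on hT
          (((ha.continuousOn_deriv_mul hg).mono Icc_subset_Ici_self).norm.intervalIntegrable_of_Icc
            hT) ((hi₁.const_mul _).add (hi₃.const_mul _)) fun x hx => ?_
        refine (norm_add_le _ _).trans ?_
        rw [norm_mul, norm_mul, mul_assoc, mul_assoc]
        exact add_le_add (mul_le_mul (hg₁ x) (ha.norm_le_far x hx.1) (norm_nonneg _) hM₁)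
          (mul_le_mul (hg₀ x) (ha.norm_derivWithin_le x hx.1) (norm_nonneg _) hM₀)
    _ = M₁ * C₀ * (∫ x in 1 / lam..T, x ^ (-(1 : ℝ) / 2))
          + M₀ * C₁ * (∫ x in 1 / lam..T, x ^ (-(3 : ℝ) / 2)) := by
        rw [intervalIntegral.integral_add (hi₁.const_mul _) (hi₃.const_mul _),
          intervalIntegral.integral_const_mul, intervalIntegral.integral_const_mul]
    _ ≤ _ := by
        rw [← one_div_rpow_neg_half hlam.le]
        gcongr
        · exact integral_rpow_neg_half_le hc.le
        · exact integral_rpow_neg_three_halves_le hc hT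

lemma norm_integral_far_le (ha : IsAdmissibleAmplitude C₀ C₁ lam a) (hlam : 1 ≤ lam)
    (hg : ContDiff ℝ 1 g) (hg₀ : ∀ r, ‖g r‖ ≤ M₀) (hg₁ : ∀ r, ‖deriv g r‖ ≤ M₁)
    (hT : 1 / lam ≤ T) (hgT : g T = 0) :
    ‖∫ r in 1 / lam..T, g r * a r * Complex.exp (Complex.I * lam * r)‖ ≤
      (M₀ * C₀ + 2 * M₁ * C₀ * T ^ ((1 : ℝ) / 2) + 2 * M₀ * C₁) * lam ^ (-(1 : ℝ) / 2) := by
  have hlam0 : 0 < lam := one_pos.trans_le hlam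
  have hc : 0 < 1 / lam := by positivity
  have hM₀ : 0 ≤ M₀ := (norm_nonneg _).trans (hg₀ 0)
  have hboundary : ‖g (1 / lam) * a (1 / lam)‖ ≤ M₀ * (C₀ * lam ^ ((1 : ℝ) / 2)) := by
    rw [norm_mul]
    exact mul_le_mul (hg₀ _) (ha.norm_le_near _ hc le_rfl) (norm_nonneg _) hM₀
  have hT₀ : 0 ≤ T ^ ((1 : ℝ) / 2) := rpow_nonneg (hc.le.trans hT) _
  have hM₁ : 0 ≤ M₁ := (norm_nonneg _).trans (hg₁ 0)
  have hC₀ := ha.C₀_nonneg hlam0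
  calc _ ≤ (‖g (1 / lam) * a (1 / lam)‖ + ‖g T * a T‖ + ∫ x in 1 / lam..T,
          ‖deriv g x * a x + g x * derivWithin a (Ici (1 / lam)) x‖) / |lam| :=
        norm_integral_mul_exp_I_mul_le hT hlam0.ne'
          (hg.continuous.continuousOn.mul (ha.contDiffOn.continuousOn.mono Icc_subset_Ici_self))
          (fun x hx => ((hg.differentiable one_ne_zero x).hasDerivAt).mul (ha.hasDerivAt hx.1))
          (((ha.continuousOn_deriv_mul hg).mono Icc_subset_Ici_self).intervalIntegrable_of_Icc hT)
    _ ≤ (M₀ * (C₀ * lam ^ ((1 : ℝ) / 2)) + 0 +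
          (M₁ * C₀ * (2 * T ^ ((1 : ℝ) / 2)) + M₀ * C₁ * (2 * lam ^ ((1 : ℝ) / 2)))) / lam := by
        rw [abs_of_pos hlam0, hgT, zero_mul, norm_zero]
        gcongr
        exact ha.integral_norm_deriv_mul_le hlam0 hg hg₀ hg₁ hT
    _ = (M₀ * C₀ + 2 * M₀ * C₁) * (lam ^ ((1 : ℝ) / 2) / lam)
          + 2 * M₁ * C₀ * T ^ ((1 : ℝ) / 2) * (1 / lam) := by ring
    _ ≤ (M₀ * C₀ + 2 * M₀ * C₁) * lam ^ (-(1 : ℝ) / 2)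
          + 2 * M₁ * C₀ * T ^ ((1 : ℝ) / 2) * lam ^ (-(1 : ℝ) / 2) := by
        rw [rpow_half_div_self hlam0]
        gcongr
        exact one_div_le_rpow_neg_half hlam
    _ = _ := by ring

lemma norm_integral_Ioi_le (ha : IsAdmissibleAmplitude C₀ C₁ lam a) (hlam : 1 ≤ lam)
    (hg : ContDiff ℝ 1 g) (hg₀ : ∀ r, ‖g r‖ ≤ M₀) (hg₁ : ∀ r, ‖deriv g r‖ ≤ M₁)
    (hT : 1 / lam ≤ T) (hgT : ∀ r, T ≤ r → g r = 0) :
    ‖∫ r in Ioi 0, g r * a r * Complex.exp (Complex.I * lam * r)‖ ≤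
      (2 * M₀ * C₀ + 2 * M₁ * C₀ * T ^ ((1 : ℝ) / 2) + 2 * M₀ * C₁) * lam ^ (-(1 : ℝ) / 2) := by
  have hlam0 : 0 < lam := one_pos.trans_le hlam
  have hc : 0 < 1 / lam := by positivity
  set f : ℝ → ℂ := fun r => g r * a r * Complex.exp (Complex.I * lam * r)
  have hnear : IntervalIntegrable f volume 0 (1 / lam) := by
    rw [intervalIntegrable_iff_integrableOn_Ioc_of_le hc.le]
    refine ⟨?_, .restrict_of_bounded _ measure_Ioc_lt_top
      ((ae_restrict_iff' measurableSet_Ioc).2 (.of_forall fun r hr =>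
        ha.norm_mul_mul_exp_le hlam0 hg₀ hr.1))⟩
    exact ((hg.continuous.aemeasurable.mul ha.aemeasurable).mul
      (by fun_prop : Continuous fun r : ℝ => Complex.exp (Complex.I * lam * r)).aemeasurable
      ).aestronglyMeasurable
  have hfar : IntervalIntegrable f volume (1 / lam) T :=
    ContinuousOn.intervalIntegrable_of_Icc hT <|
      (hg.continuous.continuousOn.mul (ha.contDiffOn.continuousOn.mono Icc_subset_Ici_self)).mul
        (by fun_prop)
  have hsplit : ∫ r in Ioi 0, f r = (∫ r in 0..1 / lam, f r) + ∫ r in 1 / lam..T, f r := by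
    rw [intervalIntegral.integral_add_adjacent_intervals hnear hfar,
      intervalIntegral.integral_of_le (hc.le.trans hT)]
    refine setIntegral_eq_of_subset_of_forall_sdiff_eq_zero measurableSet_Ioi
      Ioc_subset_Ioi_self fun r hr => ?_
    simp [f, hgT r (not_le.1 fun h => hr.2 ⟨hr.1, h⟩).le]
  rw [hsplit]
  refine (norm_add_le _ _).trans ?_
  linarith [ha.norm_integral_near_le hlam0 hg₀,
    ha.norm_integral_far_le hlam hg hg₀ hg₁ hT (hgT T le_rfl)]

lemma norm_integral_abs_le (ha : IsAdmissibleAmplitude C₀ C₁ lam a) (hlam : 1 ≤ lam)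
    (hg : ContDiff ℝ 1 g) (hg₀ : ∀ r, ‖g r‖ ≤ M₀) (hg₁ : ∀ r, ‖deriv g r‖ ≤ M₁)
    (hT : 1 / lam ≤ T) (hgT : ∀ r, T ≤ |r| → g r = 0) :
    ‖∫ r, g r * a |r| * Complex.exp (Complex.I * lam * (|r| : ℝ))‖ ≤
      2 * (2 * M₀ * C₀ + 2 * M₁ * C₀ * T ^ ((1 : ℝ) / 2) + 2 * M₀ * C₁) *
        lam ^ (-(1 : ℝ) / 2) := by
  have hg_supp : HasCompactSupport g :=
    HasCompactSupport.intro (isCompact_Icc (a := -T) (b := T)) fun r hr =>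
      hgT r (by rw [mem_Icc, ← abs_le, not_le] at hr; exact hr.le)
  have hint : Integrable fun r => g r * a |r| * Complex.exp (Complex.I * lam * (|r| : ℝ)) :=
    ha.integrable_mul_comp_abs (one_pos.trans_le hlam) (Measure.QuasiMeasurePreserving.id volume)
      (hg.continuous.integrable_of_hasCompactSupport hg_supp)
  rw [integral_eq_integral_Ioi_add_comp_neg hint, setIntegral_congr_fun measurableSet_Ioi
    (g := fun r => (g r + g (-r)) * a r * Complex.exp (Complex.I * lam * r))
    fun r (hr : 0 < r) => by simp only [abs_neg, abs_of_pos hr]; ring]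
  have hg_neg : ContDiff ℝ 1 fun r => g (-r) := hg.comp contDiff_neg
  refine (ha.norm_integral_Ioi_le hlam (g := fun r => g r + g (-r)) (M₀ := 2 * M₀)
    (M₁ := 2 * M₁) (hg.add hg_neg) (fun r => ?_) (fun r => ?_) hT (fun r hr => ?_)).trans_eq
    (by ring)
  · exact (norm_add_le _ _).trans (by linarith [hg₀ r, hg₀ (-r)])
  · rw [deriv_fun_add (hg.differentiable one_ne_zero r) (hg_neg.differentiable one_ne_zero r),
      deriv_comp_neg]
    exact (norm_sub_le _ _).trans (by linarith [hg₁ r, hg₁ (-r)])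
  · have hr' : T ≤ |r| := hr.trans (le_abs_self r)
    rw [hgT r hr', hgT (-r) (by rwa [abs_neg]), add_zero]

lemma norm_integral_prod_le (ha : IsAdmissibleAmplitude C₀ C₁ lam a) (hlam : 1 ≤ lam)
    {b : ℝ × ℝ → ℂ} (hb : ContDiff ℝ 1 b) (hb₀ : ∀ p, ‖b p‖ ≤ M₀)
    (hb₁ : ∀ p, ‖fderiv ℝ b p‖ ≤ M₁) (hT : 1 / lam ≤ T) (hbT : ∀ p, T ≤ ‖p‖ → b p = 0) :
    ‖∫ p : ℝ × ℝ, b p * a |p.2| * Complex.exp (Complex.I * lam * (|p.2| : ℝ))‖ ≤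
      4 * T * (2 * M₀ * C₀ + 2 * M₁ * C₀ * T ^ ((1 : ℝ) / 2) + 2 * M₀ * C₁) *
        lam ^ (-(1 : ℝ) / 2) := by
  have hT₀ : 0 ≤ T := (by positivity : (0 : ℝ) ≤ 1 / lam).trans hT
  have hb_supp : HasCompactSupport b := HasCompactSupport.intro (isCompact_closedBall 0 T)
    fun p hp => hbT p (by rw [Metric.mem_closedBall, dist_zero_right, not_le] at hp; exact hp.le)
  have hint : Integrable (fun p : ℝ × ℝ => b p * a |p.2| *
      Complex.exp (Complex.I * lam * (|p.2| : ℝ))) (volume.prod volume) :=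
    ha.integrable_mul_comp_abs (one_pos.trans_le hlam) Measure.quasiMeasurePreserving_snd
      (hb.continuous.integrable_of_hasCompactSupport hb_supp)
  have hslice : ∀ s, ‖∫ r, b (s, r) * a |r| * Complex.exp (Complex.I * lam * (|r| : ℝ))‖ ≤
      2 * (2 * M₀ * C₀ + 2 * M₁ * C₀ * T ^ ((1 : ℝ) / 2) + 2 * M₀ * C₁) *
        lam ^ (-(1 : ℝ) / 2) := fun s =>
    ha.norm_integral_abs_le hlam (hb.comp (contDiff_const.prodMk contDiff_id))
      (fun r => hb₀ _)
      (fun r => (norm_deriv_comp_prodMk_le (hb.differentiable one_ne_zero) s r).trans (hb₁ _))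
      hT fun r hr => hbT _ (hr.trans (by simp))
  have hslice_zero : ∀ s ∉ Ioc (-T) T,
      ∫ r, b (s, r) * a |r| * Complex.exp (Complex.I * lam * (|r| : ℝ)) = 0 := by
    intro s hs
    have hs' : T ≤ |s| := by
      rw [mem_Ioc, not_and_or, not_lt, not_le] at hs
      rcases hs with hs | hs
      · exact (le_neg.1 hs).trans (neg_le_abs s)
      · exact hs.le.trans (le_abs_self s)
    have hb_s : ∀ r, b (s, r) = 0 := fun r => hbT _ (hs'.trans (by simp))
    simp [hb_s]
  rw [Measure.volume_eq_prod, integral_prod _ hint,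
    ← setIntegral_eq_integral_of_forall_compl_eq_zero hslice_zero,
    ← intervalIntegral.integral_of_le (by linarith)]
  refine (intervalIntegral.norm_integral_le_of_norm_le_const fun s _ => hslice s).trans_eq ?_
  rw [sub_neg_eq_add, abs_of_nonneg (by linarith)]
  ring

end IsAdmissibleAmplitude

theorem stmt_13_general (btil : ℝ × ℝ → ℂ)
    (hbtil : ContDiff ℝ (⊤ : ℕ∞) btil) (hbsupp : HasCompactSupport btil)
    (C₀ C₁ : ℝ) :
    ∃ C : ℝ, ∀ lam : ℝ, 1 ≤ lam →
      ∀ a : ℝ → ℂ,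
        AEMeasurable a (volume.restrict (Set.Ioc 0 (1 / lam))) →
        ContDiffOn ℝ 1 a (Set.Ici (1 / lam)) →
        (∀ r : ℝ, 0 < r → r ≤ 1 / lam → ‖a r‖ ≤ C₀ * lam ^ ((1 : ℝ) / 2)) →
        (∀ r : ℝ, 1 / lam ≤ r → ‖a r‖ ≤ C₀ * r ^ (-(1 : ℝ) / 2)) →
        (∀ r : ℝ, 1 / lam ≤ r →
          ‖derivWithin a (Set.Ici (1 / lam)) r‖ ≤ C₁ * r ^ (-(3 : ℝ) / 2)) →
        ‖((lam ^ ((1 : ℝ) / 2) : ℝ) : ℂ) *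
            ∫ p : ℝ × ℝ, btil p * a |p.2| * Complex.exp (Complex.I * (lam : ℂ) * (|p.2| : ℝ))‖
          ≤ C := by
  have hb : ContDiff ℝ 1 btil := hbtil.of_le (by exact_mod_cast le_top)
  obtain ⟨M₀, hM₀⟩ := hbsupp.exists_bound_of_continuous hb.continuous
  obtain ⟨M₁, hM₁⟩ :=
    (hbsupp.fderiv ℝ).exists_bound_of_continuous (hb.continuous_fderiv one_ne_zero)
  obtain ⟨R, -, hR⟩ := hbsupp.exists_pos_le_norm
  set T := max R 1
  refine ⟨4 * T * (2 * M₀ * C₀ + 2 * M₁ * C₀ * T ^ ((1 : ℝ) / 2) + 2 * M₀ * C₁),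
    fun lam hlam a h_meas h_diff h_near h_far h_deriv => ?_⟩
  have ha : IsAdmissibleAmplitude C₀ C₁ lam a := ⟨h_meas, h_diff, h_near, h_far, h_deriv⟩
  have hT : 1 / lam ≤ T := ((div_le_one (one_pos.trans_le hlam)).2 hlam).trans (le_max_right _ _)
  have hbound := ha.norm_integral_prod_le hlam hb hM₀ hM₁ hT
    fun p hp => hR p ((le_max_left _ _).trans hp)
  rw [norm_mul, Complex.norm_real, norm_of_nonneg (by positivity)]
  calc _ ≤ lam ^ ((1 : ℝ) / 2) * (4 * T * (2 * M₀ * C₀ + 2 * M₁ * C₀ * T ^ ((1 : ℝ) / 2)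
          + 2 * M₀ * C₁) * lam ^ (-(1 : ℝ) / 2)) := by gcongr
    _ = _ := by
      rw [mul_comm, mul_assoc, ← rpow_add (one_pos.trans_le hlam)]
      norm_num

/-- The oscillatory integral estimate for the local part of the smoothed spectral
projector: `λ^{1/2} ∬ b̃(s,r) a(|r|) e^{iλ|r|} ds dr = O(1)`, uniformly over amplitudes
`a` satisfying `|a(r)| ≤ C₀ λ^{1/2}` for `0 < r ≤ 1/λ`, `|a(r)| ≤ C₀ r^{-1/2}` and
`|a'(r)| ≤ C₁ r^{-3/2}` for `r ≥ 1/λ`. -/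
theorem stmt_13 (btil : ℝ × ℝ → ℂ)
    (hbtil : ContDiff ℝ (⊤ : ℕ∞) btil) (hbsupp : HasCompactSupport btil)
    (C₀ C₁ : ℝ) (hC₀ : 0 < C₀) (hC₁ : 0 < C₁) :
    ∃ C : ℝ, ∀ lam : ℝ, 1 ≤ lam →
      ∀ a : ℝ → ℂ,
        AEMeasurable a (volume.restrict (Set.Ioc 0 (1 / lam))) →
        ContDiffOn ℝ 1 a (Set.Ici (1 / lam)) →
        (∀ r : ℝ, 0 < r → r ≤ 1 / lam → ‖a r‖ ≤ C₀ * lam ^ ((1 : ℝ) / 2)) →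
        (∀ r : ℝ, 1 / lam ≤ r → ‖a r‖ ≤ C₀ * r ^ (-(1 : ℝ) / 2)) →
        (∀ r : ℝ, 1 / lam ≤ r →
          ‖derivWithin a (Set.Ici (1 / lam)) r‖ ≤ C₁ * r ^ (-(3 : ℝ) / 2)) →
        ‖((lam ^ ((1 : ℝ) / 2) : ℝ) : ℂ) *
            ∫ p : ℝ × ℝ, btil p * a |p.2| * Complex.exp (Complex.I * (lam : ℂ) * (|p.2| : ℝ))‖
          ≤ C :=
  stmt_13_general btil hbtil hbsupp C₀ C₁
end
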